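/- arXiv:2305.05236 — 4 statements merged into one kernel-verified Lean document; each statement's English description precedes it below -/
import Mathlib

section
/- Let $\mathcal{M}$ be a finite set, $q \geq 2$, and $\chi : \mathbb{C}^{\mathcal{M}} \to \mathbb{R}$ a homogeneous polynomial of degree $2q$ commuting with the Euclidean norm, with $\|\chi\|_\infty < \infty$. Then for all $t \geq 0$, $u, v \in \mathbb{C}^{\mathcal{M}}$, the differential of the flow satisfies $\|\mathrm{d}\Phi_\chi^t(u)(v)\| \leq \exp(4q^2 t \|\chi\|_\infty \|u\|^{2q-2})\|v\|$. -/
/-!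
By Banach's theorem, the norm of a symmetric multilinear form `L` on a finite-dimensional real
inner product space equals `sup_{‖u‖ ≤ 1} |L (u, …, u)|`. To see this, maximize `L` over tuples of
unit vectors and, among the maximizers, pick `w` with `‖∑ wᵢ‖` largest. First-order conditions
give `L (w with wᵢ replaced by v) = L w * ⟪wᵢ, v⟫`. So if `wᵢ ≠ ±wⱼ`, putting the normalized
`wᵢ ± wⱼ` into both slots gives two more maximizers. The sum of `w` lies strictly between their
sums, which contradicts strict convexity of the norm. Hence every `wᵢ` is `±w₀`.

With `χ = L (u, …, u)` and `‖L‖ ≤ ‖χ‖_∞ = C`, this makes `∇χ` Lipschitz with constant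
`(2q)² C R^(2q-2)` on the ball of radius `R`. The flow preserves `‖u‖` because
`⟪-i ∇χ(u), u⟫_ℝ = 0`. So Grönwall's inequality gives
`‖Φᵗ x - Φᵗ u‖ ≤ exp ((2q)² C max(‖x‖, ‖u‖)^(2q-2) t) ‖x - u‖`, and letting `x → u` bounds
the differential.
-/

open Function Set Metric
open scoped NNReal RealInnerProductSpace

theorem Fintype.sum_update {ι G : Type*} [Fintype ι] [DecidableEq ι] [AddCommGroup G]
    (f : ι → G) (i : ι) (b : G) : ∑ k, update f i b k = ∑ k, f k - f i + b := by
  rw [Finset.sum_update_of_mem (Finset.mem_univ i), Finset.sdiff_singleton_eq_erase,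
    ← Finset.add_sum_erase _ f (Finset.mem_univ i)]
  abel

theorem ContinuousMultilinearMap.map_update_neg {R ι M N : Type*} [Ring R] [AddCommGroup M]
    [AddCommGroup N] [Module R M] [Module R N] [TopologicalSpace M] [TopologicalSpace N]
    [DecidableEq ι] (f : ContinuousMultilinearMap R (fun _ : ι => M) N) (m : ι → M) (i : ι)
    (x : M) : f (update m i (-x)) = -f (update m i x) :=
  f.toMultilinearMap.map_update_neg m i x

section Banach

variable {E : Type*} [NormedAddCommGroup E] [InnerProductSpace ℝ E]

theorem ContinuousLinearMap.apply_eq_mul_inner_of_norm_le [CompleteSpace E] (φ : E →L[ℝ] ℝ)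
    {x : E} (hx : ‖x‖ = 1) (hφ : ‖φ‖ ≤ φ x) (v : E) : φ v = φ x * ⟪x, v⟫ := by
  set y := (InnerProductSpace.toDual ℝ E).symm φ
  have hy (v : E) : ⟪y, v⟫ = φ v := InnerProductSpace.toDual_symm_apply
  have hyn : ‖y‖ = φ x := by
    refine le_antisymm (by simpa [y] using hφ) ?_
    simpa [← hy, hx] using real_inner_le_norm y x
  have hyx : y = φ x • x := by
    have := inner_eq_norm_mul_iff_real.mp (by rw [hy, hyn, hx, mul_one] : ⟪y, x⟫ = ‖y‖ * ‖x‖)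
    rwa [hx, one_smul, hyn] at this
  rw [← hy, hyx, real_inner_smul_left]

namespace MultilinearMap

variable {R ι M N : Type*} [CommSemiring R] [AddCommMonoid M] [AddCommMonoid N] [Module R M]
  [Module R N] [DecidableEq ι]

def twoSlots (f : MultilinearMap R (fun _ : ι => M) N) (w : ι → M) {i j : ι} (hij : i ≠ j) :
    M →ₗ[R] M →ₗ[R] N :=
  LinearMap.mk₂ R (fun x y => f (update (update w i x) j y))
    (fun x x' y => by simp only [update_comm hij]; exact f.map_update_add _ i x x')
    (fun c x y => by simp only [update_comm hij]; exact f.map_update_smul _ i c x)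
    (fun x y y' => f.map_update_add _ j y y')
    (fun c x y => f.map_update_smul _ j c y)

theorem twoSlots_apply (f : MultilinearMap R (fun _ : ι => M) N) (w : ι → M) {i j : ι}
    (hij : i ≠ j) (x y : M) : f.twoSlots w hij x y = f (update (update w i x) j y) := rfl

end MultilinearMap

namespace ContinuousMultilinearMap

variable {n : ℕ} (L : ContinuousMultilinearMap ℝ (fun _ : Fin n => E) ℝ)

local notation "𝕊" => univ.pi fun _ : Fin n => sphere (0 : E) 1

theorem abs_apply_update_le_of_isMaxOn {w : Fin n → E} (hw : IsMaxOn L 𝕊 w) (hwS : w ∈ 𝕊)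
    (i : Fin n) (v : E) : |L (update w i v)| ≤ L w * ‖v‖ := by
  suffices h : ∀ v, L (update w i v) ≤ L w * ‖v‖ by
    refine abs_le.2 ⟨?_, h v⟩
    linarith [norm_neg v ▸ L.map_update_neg w i v ▸ h (-v)]
  intro v
  rcases eq_or_ne v 0 with rfl | hv
  · simp [L.map_coord_zero i (update_self i 0 w)]
  have hmem : update w i (‖v‖⁻¹ • v) ∈ 𝕊 :=
    (update_mem_pi_iff_of_mem hwS).2 fun _ => by simp [norm_smul, hv]
  calc L (update w i v) = ‖v‖ * L (update w i (‖v‖⁻¹ • v)) := by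
        rw [L.map_update_smul, smul_eq_mul, ← mul_assoc, mul_inv_cancel₀ (norm_ne_zero_iff.mpr hv),
          one_mul]
    _ ≤ ‖v‖ * L w := by gcongr; exact hw hmem
    _ = L w * ‖v‖ := mul_comm _ _

theorem apply_update_eq_mul_inner_of_isMaxOn [CompleteSpace E] {w : Fin n → E}
    (hw : IsMaxOn L 𝕊 w) (hwS : w ∈ 𝕊) (i : Fin n) (v : E) :
    L (update w i v) = L w * ⟪w i, v⟫ := by
  have hwi : ‖w i‖ = 1 := by simpa using hwS i
  have hbound := L.abs_apply_update_le_of_isMaxOn hw hwS i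
  have hφ : ‖L.toContinuousLinearMap w i‖ ≤ L w := by
    have h0 : 0 ≤ L w := by simpa [hwi] using (abs_nonneg _).trans (hbound (w i))
    exact ContinuousLinearMap.opNorm_le_bound _ h0 fun v => by simpa using hbound v
  simpa using (L.toContinuousLinearMap w i).apply_eq_mul_inner_of_norm_le hwi (by simpa using hφ) v

theorem apply_update_update_eq_of_isMaxOn [CompleteSpace E]
    (hsym : ∀ (σ : Equiv.Perm (Fin n)) (v : Fin n → E), L (v ∘ σ) = L v) {w : Fin n → E}
    (hw : IsMaxOn L 𝕊 w) (hwS : w ∈ 𝕊) {i j : Fin n} (hij : i ≠ j) {s : ℝ} (hs : s ^ 2 = 1) :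
    L (update (update w i (w i + s • w j)) j (s • (w i + s • w j))) =
      L w * ‖w i + s • w j‖ ^ 2 := by
  set T := L.toMultilinearMap.twoSlots w hij
  have hslot := L.apply_update_eq_mul_inner_of_isMaxOn hw hwS
  have hTi (v : E) : T (w i) v = L w * ⟪w j, v⟫ := by
    rw [← hslot, MultilinearMap.twoSlots_apply, update_eq_self]; rfl
  have hTj (v : E) : T v (w j) = L w * ⟪w i, v⟫ := by
    rw [← hslot, MultilinearMap.twoSlots_apply, ← update_of_ne hij.symm v w, update_eq_self]; rfl
  have hTji : T (w j) (w i) = L w := by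
    rw [MultilinearMap.twoSlots_apply, ← Equiv.comp_swap_eq_update]; exact hsym _ w
  have hwi : ‖w i‖ = 1 := by simpa using hwS i
  have hwj : ‖w j‖ = 1 := by simpa using hwS j
  have hnorm : ‖w i + s • w j‖ ^ 2 = 1 + 2 * s * ⟪w i, w j⟫ + s ^ 2 := by
    rw [norm_add_sq_real, norm_smul, real_inner_smul_right, hwi, hwj, Real.norm_eq_abs, mul_one,
      sq_abs]
    ring
  change T _ _ = _
  simp only [map_add, map_smul, LinearMap.add_apply, LinearMap.smul_apply, smul_eq_mul, hTi, hTj,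
    hTji]
  rw [hnorm, real_inner_self_eq_norm_sq, hwj, real_inner_comm]
  linear_combination (L w * (1 + s * ⟪w i, w j⟫)) * hs

-- Replacing `(w i, w j)` by `(e, s • e)`, with `e` the direction of `w i + s • w j`, gives another
-- maximizer of `L`, so it cannot increase the norm of the sum when `w` maximizes that norm.
theorem norm_sum_update_update_le_of_isMaxOn [CompleteSpace E]
    (hsym : ∀ (σ : Equiv.Perm (Fin n)) (v : Fin n → E), L (v ∘ σ) = L v) {w : Fin n → E}
    (hw : IsMaxOn L 𝕊 w) (hwS : w ∈ 𝕊)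
    (hsum : IsMaxOn (fun z => ‖∑ k, z k‖) (𝕊 ∩ {z | L z = L w}) w) {i j : Fin n} (hij : i ≠ j)
    {s : ℝ} (hs : s ^ 2 = 1) (hx : w i + s • w j ≠ 0) :
    ‖∑ k, w k - w i - w j + (1 + s) • (‖w i + s • w j‖⁻¹ • (w i + s • w j))‖ ≤ ‖∑ k, w k‖ := by
  set x := w i + s • w j
  set e := ‖x‖⁻¹ • x
  have he : ‖e‖ = 1 := by simp [e, norm_smul, hx]
  have hs' : |s| = 1 := (pow_eq_one_iff_of_nonneg (abs_nonneg s) two_ne_zero).1 (by rwa [sq_abs])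
  have hscale : L (update (update w i e) j (s • e)) =
      ‖x‖⁻¹ * (‖x‖⁻¹ * L (update (update w i x) j (s • x))) := by
    set T := L.toMultilinearMap.twoSlots w hij
    change T (‖x‖⁻¹ • x) (s • ‖x‖⁻¹ • x) = ‖x‖⁻¹ * (‖x‖⁻¹ * T x (s • x))
    rw [smul_comm s, LinearMap.map_smul₂, (T x).map_smul, smul_eq_mul, smul_eq_mul]
  have hmem : update (update w i e) j (s • e) ∈ 𝕊 ∩ {z | L z = L w} := by
    refine ⟨(update_mem_pi_iff_of_mem ((update_mem_pi_iff_of_mem hwS).2 fun _ => by simpa)).2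
      fun _ => by simp [norm_smul, he, hs'], ?_⟩
    rw [mem_ofPred_eq, hscale, L.apply_update_update_eq_of_isMaxOn hsym hw hwS hij hs]
    field_simp [norm_ne_zero_iff.mpr hx]
    exact mul_comm _ _
  have h : ‖∑ k, update (update w i e) j (s • e) k‖ ≤ ‖∑ k, w k‖ := hsum hmem
  rw [Fintype.sum_update, Fintype.sum_update, update_of_ne hij.symm] at h
  convert h using 2
  simp only [add_smul, one_smul]
  abel

theorem eq_or_eq_neg_of_isMaxOn [CompleteSpace E]
    (hsym : ∀ (σ : Equiv.Perm (Fin n)) (v : Fin n → E), L (v ∘ σ) = L v) {w : Fin n → E}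
    (hw : IsMaxOn L 𝕊 w) (hwS : w ∈ 𝕊)
    (hsum : IsMaxOn (fun z => ‖∑ k, z k‖) (𝕊 ∩ {z | L z = L w}) w) (i j : Fin n) :
    w j = w i ∨ w j = -w i := by
  by_contra! ⟨hne, hne'⟩
  have hij : i ≠ j := by rintro rfl; exact hne rfl
  set Y := ∑ k, w k - w i - w j
  set p := w i + w j
  have hp : p ≠ 0 := fun h => hne' (eq_neg_of_add_eq_zero_right h)
  have hP0 : 0 < ‖p‖ := norm_pos_iff.mpr hp
  have hP2 : ‖p‖ < 2 := by
    have := norm_combo_lt_of_ne (le_of_eq (by simpa using hwS i)) (le_of_eq (by simpa using hwS j))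
      hne.symm (by norm_num : (0 : ℝ) < 1 / 2) (by norm_num : (0 : ℝ) < 1 / 2) (by norm_num)
    rw [← smul_add, norm_smul] at this
    norm_num at this
    linarith
  have hplus := L.norm_sum_update_update_le_of_isMaxOn hsym hw hwS hsum hij (one_pow 2)
    (by rwa [one_smul])
  have hminus := L.norm_sum_update_update_le_of_isMaxOn hsym hw hwS hsum hij (s := -1)
    (by norm_num) (by rwa [neg_one_smul, ← sub_eq_add_neg, sub_ne_zero, ne_comm])
  rw [one_smul] at hplus
  norm_num at hminus
  -- `∑ w = Y + p` lies strictly between `Y` and `Y + 2 • (‖p‖⁻¹ • p)`.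
  have hcombo : (1 - ‖p‖ / 2) • Y + (‖p‖ / 2) • (Y + (1 + 1 : ℝ) • (‖p‖⁻¹ • p)) = ∑ k, w k := by
    have hP : ‖w i + w j‖ ≠ 0 := hP0.ne'
    simp only [Y, p]
    match_scalars <;> field_simp <;> ring
  have hY : Y ≠ Y + (1 + 1 : ℝ) • (‖p‖⁻¹ • p) := by simp [hp]
  have := norm_combo_lt_of_ne (a := 1 - ‖p‖ / 2) (b := ‖p‖ / 2) hminus hplus hY (by linarith)
    (by positivity) (by ring)
  exact (hcombo ▸ this).false

theorem abs_apply_le_of_abs_apply_diag_le [ProperSpace E]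
    (hsym : ∀ (σ : Equiv.Perm (Fin n)) (v : Fin n → E), L (v ∘ σ) = L v) {C : ℝ}
    (hC : ∀ u : E, ‖u‖ ≤ 1 → |L fun _ => u| ≤ C) {x : Fin n → E} (hx : x ∈ 𝕊) : |L x| ≤ C := by
  rcases isEmpty_or_nonempty (Fin n) with _ | ⟨⟨i₀⟩⟩
  · simpa [Subsingleton.elim x fun _ => 0] using hC 0 (by simp)
  have hS : IsCompact 𝕊 := isCompact_univ_pi fun _ => isCompact_sphere 0 1
  obtain ⟨w₀, hw₀S, hw₀⟩ := hS.exists_isMaxOn ⟨x, hx⟩ L.coe_continuous.continuousOn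
  obtain ⟨w, ⟨hwS, hwL : L w = L w₀⟩, hsum⟩ :=
    (hS.inter_right (isClosed_eq L.coe_continuous continuous_const)).exists_isMaxOn ⟨w₀, hw₀S, rfl⟩
      (by fun_prop : Continuous fun z : Fin n → E => ‖∑ k, z k‖).continuousOn
  have hw : IsMaxOn L 𝕊 w := fun y hy => hwL ▸ hw₀ hy
  rw [← hwL] at hsum
  have hsign (j : Fin n) : ∃ c : ℝ, |c| = 1 ∧ w j = c • w i₀ := by
    rcases L.eq_or_eq_neg_of_isMaxOn hsym hw hwS hsum i₀ j with h | h
    exacts [⟨1, by simp, by simp [h]⟩, ⟨-1, by simp, by simp [h]⟩]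
  choose c hc hwc using hsign
  have hLw : |L w| ≤ C := by
    rw [show w = fun j => c j • w i₀ from funext hwc, L.map_smul_univ, smul_eq_mul, abs_mul,
      Finset.abs_prod, Finset.prod_congr rfl fun j _ => hc j, Finset.prod_const_one, one_mul]
    exact hC _ (le_of_eq (by simpa using hwS i₀))
  have hneg : -L x ≤ L w := by
    have h : L (update x i₀ (-x i₀)) ≤ L w :=
      hw ((update_mem_pi_iff_of_mem hx).2 fun _ => by simpa using hx i₀)
    rwa [L.map_update_neg, update_eq_self] at h
  exact (abs_le.2 ⟨by linarith, hw hx⟩).trans ((le_abs_self _).trans hLw)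

theorem norm_le_of_abs_apply_diag_le [ProperSpace E]
    (hsym : ∀ (σ : Equiv.Perm (Fin n)) (v : Fin n → E), L (v ∘ σ) = L v) {C : ℝ}
    (hC : ∀ u : E, ‖u‖ ≤ 1 → |L fun _ => u| ≤ C) : ‖L‖ ≤ C := by
  refine L.opNorm_le_bound ((abs_nonneg _).trans (hC 0 (by simp))) fun x => ?_
  by_cases hx : ∀ i, x i ≠ 0
  swap
  · obtain ⟨i, hi⟩ := not_forall_not.mp hx
    rw [L.map_coord_zero i hi, norm_zero]
    exact mul_nonneg ((abs_nonneg _).trans (hC 0 (by simp))) (by positivity)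
  have hunit : (fun i => ‖x i‖⁻¹ • x i) ∈ 𝕊 := fun i _ => by simp [norm_smul, hx i]
  calc ‖L x‖ = (∏ i, ‖x i‖) * |L fun i => ‖x i‖⁻¹ • x i| := by
        rw [← abs_of_nonneg (Finset.prod_nonneg fun i _ => norm_nonneg (x i)), ← abs_mul,
          ← smul_eq_mul, ← L.map_smul_univ]
        simp [smul_smul, hx]
    _ ≤ (∏ i, ‖x i‖) * C := by gcongr; exact L.abs_apply_le_of_abs_apply_diag_le hsym hC hunit
    _ = C * ∏ i, ‖x i‖ := mul_comm _ _

end ContinuousMultilinearMap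

end Banach

theorem ContinuousMultilinearMap.apply_update_const_eq {R ι M N : Type*} [Semiring R]
    [AddCommMonoid M] [AddCommMonoid N] [Module R M] [Module R N] [TopologicalSpace M]
    [TopologicalSpace N] [DecidableEq ι] (f : ContinuousMultilinearMap R (fun _ : ι => M) N)
    (hsym : ∀ (σ : Equiv.Perm ι) (v : ι → M), f (v ∘ σ) = f v) (u v : M) (i k : ι) :
    f (update (fun _ => u) k v) = f (update (fun _ => u) i v) := by
  rw [← hsym (Equiv.swap i k), update_comp_equiv, Equiv.symm_swap, Equiv.swap_apply_right]
  rfl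

theorem ContinuousMultilinearMap.fderiv_apply_diag {𝕜 E F : Type*} [NontriviallyNormedField 𝕜]
    [NormedAddCommGroup E] [NormedSpace 𝕜 E] [NormedAddCommGroup F] [NormedSpace 𝕜 F] {n : ℕ}
    (f : ContinuousMultilinearMap 𝕜 (fun _ : Fin n => E) F)
    (hsym : ∀ (σ : Equiv.Perm (Fin n)) (v : Fin n → E), f (v ∘ σ) = f v) (u v : E) (i : Fin n) :
    fderiv 𝕜 (fun x => f fun _ => x) u v = n • f (update (fun _ => u) i v) := by
  have hf : HasFDerivAt (fun x => f fun _ => x) _ u :=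
    HasFDerivAt.multilinear_comp f fun _ => hasFDerivAt_id u
  simp [hf.fderiv, f.apply_update_const_eq hsym u v i]

theorem norm_sub_le_of_inner_eq_apply_update {E : Type*} [NormedAddCommGroup E]
    [InnerProductSpace ℝ E] {n : ℕ} (hn : 2 ≤ n)
    (L : ContinuousMultilinearMap ℝ (fun _ : Fin n => E) ℝ) (i : Fin n) {g : E → E}
    (hg : ∀ u v, ⟪g u, v⟫ = n * L (update (fun _ => u) i v)) {R : ℝ} {x y : E} (hx : ‖x‖ ≤ R)
    (hy : ‖y‖ ≤ R) : ‖g x - g y‖ ≤ n ^ 2 * ‖L‖ * R ^ (n - 2) * ‖x - y‖ := by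
  have hR : 0 ≤ R := (norm_nonneg x).trans hx
  -- `norm_image_sub_le` measures tuples in the sup norm, hence the restriction `‖v‖ ≤ R`.
  have hinner (v : E) (hvR : ‖v‖ ≤ R) :
      ⟪g x - g y, v⟫ ≤ n * (‖L‖ * n * R ^ (n - 1) * ‖x - y‖) := by
    rw [inner_sub_left, hg, hg, ← mul_sub]
    gcongr
    refine (le_abs_self _).trans ((L.norm_image_sub_le _ _).trans ?_)
    rw [Fintype.card_fin]
    gcongr
    · refine max_le ?_ ?_ <;> refine (pi_norm_le_iff_of_nonneg hR).2 fun k => ?_ <;>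
        rcases eq_or_ne k i with rfl | hk <;> simp [*]
    · refine (pi_norm_le_iff_of_nonneg (norm_nonneg _)).2 fun k => ?_
      rcases eq_or_ne k i with rfl | hk <;> simp [*]
  rcases hR.eq_or_lt with rfl | hRpos
  · simp [norm_le_zero_iff.1 hx, norm_le_zero_iff.1 hy]
  set d := g x - g y
  have h := hinner ((R * ‖d‖⁻¹) • d) <| by
    rw [norm_smul, Real.norm_eq_abs, abs_of_nonneg (by positivity), mul_assoc]
    exact mul_le_of_le_one_right hR (inv_mul_le_one_of_le₀ le_rfl (norm_nonneg d))
  rw [real_inner_smul_right, real_inner_self_eq_norm_sq, sq, ← mul_assoc, mul_assoc R,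
    mul_assoc R, inv_mul_mul_self] at h
  have hpow : R ^ (n - 1) = R * R ^ (n - 2) := by rw [← pow_succ']; congr 1; omega
  refine le_of_mul_le_mul_left (h.trans_eq ?_) hRpos
  rw [hpow]
  ring

theorem norm_eq_of_hasDerivAt_of_inner_eq_zero {E : Type*} [NormedAddCommGroup E]
    [InnerProductSpace ℝ E] {γ γ' : ℝ → E} (hγ : ∀ t, HasDerivAt γ (γ' t) t)
    (h : ∀ t, ⟪γ t, γ' t⟫ = 0) (t : ℝ) : ‖γ t‖ = ‖γ 0‖ := by
  have hd (t : ℝ) : HasDerivAt (fun t => ‖γ t‖ ^ 2) 0 t := by simpa [h t] using (hγ t).norm_sq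
  exact (sq_eq_sq₀ (norm_nonneg _) (norm_nonneg _)).1 <|
    is_const_of_deriv_eq_zero (fun t => (hd t).differentiableAt) (fun t => (hd t).deriv) t 0

theorem norm_flow_sub_le {F : Type*} [NormedAddCommGroup F] [NormedSpace ℝ F] {f : F → F}
    {Φ : ℝ → F → F} (hΦ0 : ∀ x, Φ 0 x = x) (hΦ : ∀ t x, HasDerivAt (fun s => Φ s x) (f (Φ t x)) t)
    (hnorm : ∀ t x, ‖Φ t x‖ = ‖x‖) {k : ℝ → ℝ} (hk : ∀ R, 0 ≤ R → 0 ≤ k R)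
    (hf : ∀ R a b, ‖a‖ ≤ R → ‖b‖ ≤ R → ‖f a - f b‖ ≤ k R * ‖a - b‖) {t : ℝ} (ht : 0 ≤ t)
    (x y : F) : ‖Φ t x - Φ t y‖ ≤ Real.exp (k (max ‖x‖ ‖y‖) * t) * ‖x - y‖ := by
  set R := max ‖x‖ ‖y‖
  have hkR : 0 ≤ k R := hk R ((norm_nonneg x).trans (le_max_left _ _))
  have hlip : LipschitzOnWith (k R).toNNReal f (closedBall 0 R) :=
    LipschitzOnWith.of_dist_le_mul fun a ha b hb => by
      simpa [dist_eq_norm, hkR] using hf R a b (by simpa using ha) (by simpa using hb)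
  have hcont (z : F) : ContinuousOn (fun s => Φ s z) (Icc 0 t) :=
    (continuous_iff_continuousAt.2 fun s => (hΦ s z).continuousAt).continuousOn
  have hball (z : F) (hz : ‖z‖ ≤ R) (s : ℝ) : Φ s z ∈ closedBall 0 R := by simpa [hnorm] using hz
  have := dist_le_of_trajectories_ODE_of_mem (v := fun _ => f) (s := fun _ => closedBall 0 R)
    (fun _ _ => hlip) (hcont x) (fun s _ => (hΦ s x).hasDerivWithinAt)
    (fun s _ => hball x (le_max_left _ _) s) (hcont y) (fun s _ => (hΦ s y).hasDerivWithinAt)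
    (fun s _ => hball y (le_max_right _ _) s) le_rfl t ⟨ht, le_rfl⟩
  rwa [dist_eq_norm, dist_eq_norm, sub_zero, hΦ0, hΦ0, Real.coe_toNNReal _ hkR, mul_comm] at this

theorem norm_fderiv_le_of_norm_sub_le {𝕜 E F : Type*} [NontriviallyNormedField 𝕜]
    [NormedAddCommGroup E] [NormedSpace 𝕜 E] [NormedAddCommGroup F] [NormedSpace 𝕜 F]
    {f : E → F} {c : E → ℝ} {u : E} (hc : ContinuousAt c u) (hcu : 0 ≤ c u)
    (hf : ∀ x, ‖f x - f u‖ ≤ c x * ‖x - u‖) : ‖fderiv 𝕜 f u‖ ≤ c u := by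
  refine le_of_forall_pos_le_add fun ε hε => norm_fderiv_le_of_lip' 𝕜 (by positivity) ?_
  filter_upwards [hc.eventually (gt_mem_nhds (lt_add_of_pos_right (c u) hε))] with x hx
  exact (hf x).trans (by gcongr)

-- The `ℝ`-inner product on `EuclideanSpace ℂ ι` is the `PiLp` one, which is not definitionally
-- `InnerProductSpace.rclikeToReal`.
theorem EuclideanSpace.real_inner_eq_re_inner {ι : Type*} [Fintype ι] (x y : EuclideanSpace ℂ ι) :
    ⟪x, y⟫ = (inner ℂ x y).re := by
  simp [PiLp.inner_apply, Complex.re_sum]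

/-- Control of the differential of the Hamiltonian flow:
`‖dΦ_χ^t(u)(v)‖ ≤ exp(4 q² t ‖χ‖_∞ ‖u‖^(2q-2)) ‖v‖` for `t ≥ 0`. -/
theorem stmt_4 {M : Type*} [Fintype M] (q : ℕ) (hq : 2 ≤ q)
    (χ : EuclideanSpace ℂ M → ℝ)
    (L : ContinuousMultilinearMap ℝ (fun _ : Fin (2 * q) => EuclideanSpace ℂ M) ℝ)
    (hsym : ∀ (σ : Equiv.Perm (Fin (2 * q))) (v : Fin (2 * q) → EuclideanSpace ℂ M),
      L (v ∘ σ) = L v)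
    (hχ : ∀ u, χ u = L (fun _ => u))
    (gradχ : EuclideanSpace ℂ M → EuclideanSpace ℂ M)
    (hgrad : ∀ u v : EuclideanSpace ℂ M, fderiv ℝ χ u v = (inner ℂ (gradχ u) v : ℂ).re)
    (hcomm : ∀ u : EuclideanSpace ℂ M, ((inner ℂ (Complex.I • gradχ u) u : ℂ)).re = 0)
    (C : ℝ) (hC : ∀ u : EuclideanSpace ℂ M, ‖u‖ ≤ 1 → |χ u| ≤ C)
    (Φ : ℝ → EuclideanSpace ℂ M → EuclideanSpace ℂ M)
    (hΦ0 : ∀ u, Φ 0 u = u)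
    (hΦ : ∀ (t : ℝ) (u : EuclideanSpace ℂ M),
      HasDerivAt (fun s => Φ s u) ((-Complex.I) • gradχ (Φ t u)) t) :
    ∀ (t : ℝ), 0 ≤ t → ∀ (u v : EuclideanSpace ℂ M),
      ‖fderiv ℝ (fun w => Φ t w) u v‖
        ≤ Real.exp (4 * q ^ 2 * t * C * ‖u‖ ^ (2 * q - 2)) * ‖v‖ := by
  intro t ht u v
  set i₀ : Fin (2 * q) := ⟨0, by omega⟩
  have hL : ‖L‖ ≤ C := L.norm_le_of_abs_apply_diag_le hsym fun u hu => hχ u ▸ hC u hu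
  have hC0 : 0 ≤ C := (norm_nonneg L).trans hL
  have hgradL (u v : EuclideanSpace ℂ M) :
      ⟪gradχ u, v⟫ = (2 * q : ℕ) * L (update (fun _ => u) i₀ v) := by
    rw [← nsmul_eq_mul, ← L.fderiv_apply_diag hsym u v i₀, ← funext hχ, hgrad]
    exact EuclideanSpace.real_inner_eq_re_inner _ _
  have hnorm (s : ℝ) (x : EuclideanSpace ℂ M) : ‖Φ s x‖ = ‖x‖ := by
    refine (norm_eq_of_hasDerivAt_of_inner_eq_zero (hΦ · x) (fun s => ?_) s).trans (by rw [hΦ0])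
    rw [real_inner_comm, EuclideanSpace.real_inner_eq_re_inner]
    simp [inner_neg_left, hcomm]
  have hflow := norm_flow_sub_le (f := fun z => (-Complex.I) • gradχ z) hΦ0 hΦ hnorm
    (k := fun R => ((2 * q : ℕ) : ℝ) ^ 2 * C * R ^ (2 * q - 2))
    (fun R _ => by positivity) (fun R a b ha hb => by
      have hR := (norm_nonneg a).trans ha
      rw [← smul_sub, norm_smul, norm_neg, Complex.norm_I, one_mul]
      exact (norm_sub_le_of_inner_eq_apply_update (by omega) L i₀ hgradL ha hb).trans
        (by gcongr)) ht
  calc ‖fderiv ℝ (fun w => Φ t w) u v‖ ≤ ‖fderiv ℝ (fun w => Φ t w) u‖ * ‖v‖ :=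
        (fderiv ℝ (fun w => Φ t w) u).le_opNorm v
    _ ≤ Real.exp (((2 * q : ℕ) : ℝ) ^ 2 * C * max ‖u‖ ‖u‖ ^ (2 * q - 2) * t) * ‖v‖ := by
        gcongr
        exact norm_fderiv_le_of_norm_sub_le (by fun_prop) (by positivity) (hflow · u)
    _ = _ := by rw [max_self]; push_cast; ring_nf
end

section
/- Let $\mathcal{M}$ be a finite set, $\omega^{(i)} \in \mathbb{Z}^{\mathcal{M}}\setminus\{0\}$, $q \geq 1$, and $P$ a homogeneous polynomial of degree $2q$ on $\mathbb{C}^{\mathcal{M}}$ commuting with the Euclidean norm. Define $\|P\|_{\mathscr{H}} = \sup_{a\in\mathbb{Z}}\|\lfloor\Pi_{\omega^{(i)},a}P\rceil\|_\infty$ and $\|P\|_{\mathscr{C}} = \sup_{a\in\mathbb{Z}}\langle a\rangle\|\lfloor\Pi_{\omega^{(i)},a}P\rceil\|_\infty$. Then $\|P\|_{\mathscr{H}} \leq \|\lfloor P\rceil\|_\infty \leq 5q|\omega^{(i)}|_\infty\|P\|_{\mathscr{H}}$ and $\|\lfloor P\rceil\|_\infty \leq 5\log(2q|\omega^{(i)}|_\infty)\|P\|_{\mathscr{C}}$,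 where $|\omega^{(i)}|_\infty = \max_{j\in\mathcal{M}}|\omega^{(i)}_j|$. -/
/-!
Every coefficient of `⌊Q⌉` is a modulus, so `|⌊Q⌉(u)| ≤ ⌊Q⌉(|u|)` with `|u| = (|u_j|)_j` still in the
unit ball: all the sup norms are computed on vectors with nonnegative entries, where `⌊Q⌉` is
monotone and additive in the moduli of the coefficients. A monomial `u_k conj(u_l)` has frequency
`∑ ω_{k_i} - ∑ ω_{l_i}` of modulus at most `N = 2q|ω|_∞`, so at such vectors
`⌊P⌉ = ∑_{|a| ≤ N} ⌊Π_{ω,a} P⌉`. Bounding each summand by `‖P‖_ℋ` gives the factor `2N + 1`;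
bounding it by `⟨a⟩⁻¹ ‖P‖_𝒞` gives the factor `∑_{|a| ≤ N} ⟨a⟩⁻¹ ≤ 3 + 2 log N`, compared with
harmonic numbers.
-/
open scoped BigOperators

/-- The monomial `u_{k₁}⋯u_{k_q} conj(u_{ℓ₁})⋯conj(u_{ℓ_q})`. -/
def mono {M : Type*} [Fintype M] (q : ℕ) (k l : Fin q → M) (u : M → ℂ) : ℂ :=
  (∏ i, u (k i)) * ∏ i, (starRingEnd ℂ) (u (l i))

/-- Evaluation of the modulus polynomial `⌊P⌉`. -/
noncomputable def pabs {M : Type*} [Fintype M] (q : ℕ)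
    (P : (Fin q → M) → (Fin q → M) → ℂ) (u : M → ℂ) : ℂ :=
  ∑ k : Fin q → M, ∑ l : Fin q → M, ((‖P k l‖ : ℝ) : ℂ) * mono q k l u

/-- Symmetry of the coefficients. -/
def IsSymmCoef {M : Type*} [Fintype M] (q : ℕ)
    (P : (Fin q → M) → (Fin q → M) → ℂ) : Prop :=
  ∀ (φ σ : Equiv.Perm (Fin q)) (k l : Fin q → M), P (k ∘ φ) (l ∘ σ) = P k l

/-- The spectral projector `Π_{ω,a}` at the level of coefficients,
for integer frequencies. -/
def projZ {M : Type*} [Fintype M] (q : ℕ) (ω : M → ℤ) (a : ℤ)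
    (P : (Fin q → M) → (Fin q → M) → ℂ) : (Fin q → M) → (Fin q → M) → ℂ :=
  fun k l => if (∑ i, ω (k i)) - (∑ i, ω (l i)) = a then P k l else 0

/-- Supremum of `|f|` over the Euclidean unit ball of `ℂ^𝓜`. -/
noncomputable def supNorm {M : Type*} [Fintype M] (f : (M → ℂ) → ℂ) : ℝ :=
  ⨆ u : {u : M → ℂ // (∑ j, ‖u j‖ ^ 2) ≤ 1}, ‖f u.1‖

/-- The norm `‖P‖_{ℋ(ω)} = sup_a ‖⌊Π_{ω,a}P⌉‖_∞`. -/
noncomputable def HNorm {M : Type*} [Fintype M] (q : ℕ) (ω : M → ℤ)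
    (P : (Fin q → M) → (Fin q → M) → ℂ) : ℝ :=
  ⨆ a : ℤ, supNorm (pabs q (projZ q ω a P))

/-- The norm `‖P‖_{𝒞(ω)} = sup_a ⟨a⟩ ‖⌊Π_{ω,a}P⌉‖_∞`. -/
noncomputable def CNorm {M : Type*} [Fintype M] (q : ℕ) (ω : M → ℤ)
    (P : (Fin q → M) → (Fin q → M) → ℂ) : ℝ :=
  ⨆ a : ℤ, Real.sqrt (1 + (a : ℝ) ^ 2) * supNorm (pabs q (projZ q ω a P))

open Finset

section ModulusPolynomial

variable {M : Type*} [Fintype M] {q : ℕ}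

/-- `⌊P⌉` evaluated at the vector `(|u_j|)_j`. -/
noncomputable def pabsAtAbs (q : ℕ) (P : (Fin q → M) → (Fin q → M) → ℂ) (u : M → ℂ) : ℝ :=
  ∑ k : Fin q → M, ∑ l : Fin q → M, ‖P k l‖ * ((∏ i, ‖u (k i)‖) * ∏ i, ‖u (l i)‖)

lemma pabsAtAbs_nonneg (P : (Fin q → M) → (Fin q → M) → ℂ) (u : M → ℂ) :
    0 ≤ pabsAtAbs q P u := by
  unfold pabsAtAbs; positivity

lemma norm_pabs_le_pabsAtAbs (P : (Fin q → M) → (Fin q → M) → ℂ) (u : M → ℂ) :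
    ‖pabs q P u‖ ≤ pabsAtAbs q P u := by
  refine (norm_sum_le _ _).trans <| (sum_le_sum fun k _ => norm_sum_le _ _).trans_eq ?_
  simp [pabsAtAbs, mono]

lemma pabs_ofReal_norm (P : (Fin q → M) → (Fin q → M) → ℂ) (u : M → ℂ) :
    pabs q P (fun j => (‖u j‖ : ℂ)) = pabsAtAbs q P u := by
  simp [pabs, pabsAtAbs, mono, Complex.conj_ofReal]

lemma pabsAtAbs_mono {Q R : (Fin q → M) → (Fin q → M) → ℂ} (h : ∀ k l, ‖Q k l‖ ≤ ‖R k l‖)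
    (u : M → ℂ) : pabsAtAbs q Q u ≤ pabsAtAbs q R u :=
  sum_le_sum fun k _ => sum_le_sum fun l _ => mul_le_mul_of_nonneg_right (h k l) (by positivity)

lemma pabsAtAbs_le_sum_norm (P : (Fin q → M) → (Fin q → M) → ℂ) {u : M → ℂ}
    (hu : ∑ j, ‖u j‖ ^ 2 ≤ 1) : pabsAtAbs q P u ≤ ∑ k, ∑ l, ‖P k l‖ := by
  have hj : ∀ j, ‖u j‖ ≤ 1 := fun j =>
    (sq_le_one_iff₀ (norm_nonneg _)).mp <|
      (single_le_sum (fun j _ => sq_nonneg ‖u j‖) (mem_univ j)).trans hu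
  have hprod : ∀ k : Fin q → M, ∏ i, ‖u (k i)‖ ≤ 1 := fun k =>
    prod_le_one (fun _ _ => norm_nonneg _) fun i _ => hj _
  refine sum_le_sum fun k _ => sum_le_sum fun l _ => mul_le_of_le_one_right (norm_nonneg _) ?_
  exact mul_le_one₀ (hprod k) (by positivity) (hprod l)

instance : Nonempty {u : M → ℂ // ∑ j, ‖u j‖ ^ 2 ≤ 1} := ⟨⟨0, by simp⟩⟩

lemma supNorm_nonneg (f : (M → ℂ) → ℂ) : 0 ≤ supNorm f :=
  Real.iSup_nonneg fun _ => norm_nonneg _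

lemma supNorm_pabs_le {P : (Fin q → M) → (Fin q → M) → ℂ} {c : ℝ}
    (h : ∀ u : M → ℂ, ∑ j, ‖u j‖ ^ 2 ≤ 1 → pabsAtAbs q P u ≤ c) : supNorm (pabs q P) ≤ c :=
  ciSup_le fun u => (norm_pabs_le_pabsAtAbs P u).trans (h u.1 u.2)

lemma pabsAtAbs_le_supNorm (P : (Fin q → M) → (Fin q → M) → ℂ) {u : M → ℂ}
    (hu : ∑ j, ‖u j‖ ^ 2 ≤ 1) : pabsAtAbs q P u ≤ supNorm (pabs q P) := by
  have hbdd : BddAbove (Set.range fun v : {v : M → ℂ // ∑ j, ‖v j‖ ^ 2 ≤ 1} => ‖pabs q P v.1‖) :=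
    ⟨_, Set.forall_mem_range.2 fun v =>
      (norm_pabs_le_pabsAtAbs P v.1).trans (pabsAtAbs_le_sum_norm P v.2)⟩
  have := le_ciSup hbdd ⟨fun j => (‖u j‖ : ℂ), by simpa using hu⟩
  rwa [pabs_ofReal_norm, Complex.norm_real, Real.norm_of_nonneg (pabsAtAbs_nonneg P u)] at this

end ModulusPolynomial

section Projector

variable {M : Type*} [Fintype M] {q : ℕ} (ω : M → ℤ) (P : (Fin q → M) → (Fin q → M) → ℂ)

lemma norm_projZ_le (a : ℤ) (k l : Fin q → M) : ‖projZ q ω a P k l‖ ≤ ‖P k l‖ := by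
  unfold projZ; split_ifs <;> simp

lemma supNorm_pabs_projZ_le (a : ℤ) : supNorm (pabs q (projZ q ω a P)) ≤ supNorm (pabs q P) :=
  supNorm_pabs_le fun _ hu =>
    (pabsAtAbs_mono (norm_projZ_le ω P a) _).trans (pabsAtAbs_le_supNorm P hu)

lemma HNorm_le_supNorm_pabs : HNorm q ω P ≤ supNorm (pabs q P) :=
  ciSup_le (supNorm_pabs_projZ_le ω P)

lemma supNorm_pabs_projZ_le_HNorm (a : ℤ) : supNorm (pabs q (projZ q ω a P)) ≤ HNorm q ω P :=
  le_ciSup ⟨_, Set.forall_mem_range.2 (supNorm_pabs_projZ_le ω P)⟩ a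

end Projector

lemma abs_sum_sub_sum_le {M : Type*} [Fintype M] {q : ℕ} (ω : M → ℤ) (k l : Fin q → M) :
    |∑ i, ω (k i) - ∑ i, ω (l i)| ≤ ((2 * q * univ.sup fun j => (ω j).natAbs : ℕ) : ℤ) := by
  have hsum : ∀ k : Fin q → M, |∑ i, ω (k i)| ≤ q * (univ.sup fun j => (ω j).natAbs : ℕ) :=
    fun k => (abs_sum_le_sum_abs _ _).trans <| by
      simpa using sum_le_sum fun i (_ : i ∈ univ) => (Int.abs_eq_natAbs (ω (k i))).trans_le <|
        Int.ofNat_le.2 <| le_sup (f := fun j => (ω j).natAbs) (mem_univ (k i))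
  push_cast
  linarith [abs_sub _ _ |>.trans (add_le_add (hsum k) (hsum l))]

section FrequencyBound

variable {M : Type*} [Fintype M] {q : ℕ} {ω : M → ℤ} {P : (Fin q → M) → (Fin q → M) → ℂ} {N : ℕ}
  (hN : ∀ k l : Fin q → M, |∑ i, ω (k i) - ∑ i, ω (l i)| ≤ N)
include hN

lemma sum_pabsAtAbs_projZ (u : M → ℂ) :
    ∑ a ∈ Icc (-N : ℤ) N, pabsAtAbs q (projZ q ω a P) u = pabsAtAbs q P u := by
  unfold pabsAtAbs
  rw [sum_comm]
  refine sum_congr rfl fun k _ => ?_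
  rw [sum_comm]
  refine sum_congr rfl fun l _ => ?_
  rw [sum_eq_single_of_mem _ (mem_Icc.2 (abs_le.1 (hN k l)))]
  · simp [projZ]
  · intro b _ hb
    simp [projZ, Ne.symm hb]

lemma supNorm_pabs_projZ_eq_zero {a : ℤ} (ha : (N : ℤ) < |a|) :
    supNorm (pabs q (projZ q ω a P)) = 0 := by
  refine le_antisymm (supNorm_pabs_le fun u _ => ?_) (supNorm_nonneg _)
  have : projZ q ω a P = 0 := by
    ext k l
    refine if_neg fun h => ?_
    have := hN k l
    rw [h] at this
    exact this.not_gt ha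
  simp [this, pabsAtAbs]

lemma supNorm_pabs_le_sum {c : ℤ → ℝ}
    (hc : ∀ a ∈ Icc (-N : ℤ) N, supNorm (pabs q (projZ q ω a P)) ≤ c a) :
    supNorm (pabs q P) ≤ ∑ a ∈ Icc (-N : ℤ) N, c a :=
  supNorm_pabs_le fun u hu => by
    rw [← sum_pabsAtAbs_projZ hN]
    exact sum_le_sum fun a ha => (pabsAtAbs_le_supNorm _ hu).trans (hc a ha)

lemma supNorm_pabs_le_mul_HNorm : supNorm (pabs q P) ≤ (2 * N + 1) * HNorm q ω P := by
  refine (supNorm_pabs_le_sum hN fun a _ => supNorm_pabs_projZ_le_HNorm ω P a).trans_eq ?_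
  rw [sum_const, nsmul_eq_mul, Int.card_Icc]
  congr 1
  rw [show (N + 1 - -N : ℤ).toNat = 2 * N + 1 by omega]
  push_cast; ring

lemma sqrt_mul_supNorm_pabs_projZ_le_CNorm (a : ℤ) :
    √(1 + (a : ℝ) ^ 2) * supNorm (pabs q (projZ q ω a P)) ≤ CNorm q ω P := by
  refine le_ciSup (f := fun b : ℤ => √(1 + (b : ℝ) ^ 2) * supNorm (pabs q (projZ q ω b P)))
    ⟨√(1 + (N : ℝ) ^ 2) * supNorm (pabs q P), ?_⟩ a
  rintro _ ⟨b, rfl⟩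
  rcases le_or_gt |b| N with hb | hb
  · refine mul_le_mul (Real.sqrt_le_sqrt ?_) (supNorm_pabs_projZ_le ω P b) (supNorm_nonneg _)
      (Real.sqrt_nonneg _)
    have : b ^ 2 ≤ (N : ℤ) ^ 2 := sq_le_sq' (abs_le.1 hb).1 (abs_le.1 hb).2
    exact_mod_cast add_le_add_right this 1
  · dsimp only
    rw [supNorm_pabs_projZ_eq_zero hN hb, mul_zero]
    exact mul_nonneg (Real.sqrt_nonneg _) (supNorm_nonneg _)

lemma supNorm_pabs_le_mul_CNorm :
    supNorm (pabs q P) ≤ (∑ a ∈ Icc (-N : ℤ) N, (√(1 + (a : ℝ) ^ 2))⁻¹) * CNorm q ω P := by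
  rw [sum_mul]
  refine supNorm_pabs_le_sum hN fun a _ => ?_
  rw [inv_mul_eq_div, le_div_iff₀' (by positivity)]
  exact sqrt_mul_supNorm_pabs_projZ_le_CNorm hN a

end FrequencyBound

lemma sum_Icc_neg_eq_of_even (f : ℤ → ℝ) (hf : ∀ a, f (-a) = f a) (N : ℕ) :
    ∑ a ∈ Icc (-N : ℤ) N, f a = f 0 + 2 * ∑ n ∈ Icc 1 N, f n := by
  induction N with
  | zero => simp
  | succ n ih =>
    have hIcc : Icc (-(n + 1 : ℕ) : ℤ) (n + 1 : ℕ)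
        = insert (-(n + 1 : ℤ)) (insert (n + 1 : ℤ) (Icc (-n : ℤ) n)) := by
      ext x; simp only [mem_Icc, mem_insert]; omega
    rw [hIcc, sum_insert (by simp only [mem_insert, mem_Icc]; omega),
      sum_insert (by simp only [mem_Icc]; omega), ih, sum_Icc_succ_top (by omega), hf]
    push_cast
    ring

lemma sum_inv_sqrt_one_add_sq_le_log {N : ℕ} (hN : 2 ≤ N) :
    ∑ a ∈ Icc (-N : ℤ) N, (√(1 + (a : ℝ) ^ 2))⁻¹ ≤ 5 * Real.log N := by
  rw [sum_Icc_neg_eq_of_even _ (fun a => by simp) N]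
  rcases hN.eq_or_lt with rfl | hN3
  · -- The harmonic bound `3 + 2 log N` exceeds `5 log N` at `N = 2`; there the sum is
    -- `1 + 2 (2^{-1/2} + 5^{-1/2}) ≈ 3.31 < 5 log 2 ≈ 3.47`.
    have h2 : (√2)⁻¹ ≤ 0.71 := by
      rw [inv_le_comm₀ (by positivity) (by norm_num), Real.le_sqrt (by norm_num) (by norm_num)]
      norm_num
    have h5 : (√5)⁻¹ ≤ 0.45 := by
      rw [inv_le_comm₀ (by positivity) (by norm_num), Real.le_sqrt (by norm_num) (by norm_num)]
      norm_num
    have : Icc 1 2 = {1, 2} := rfl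
    norm_num [this]
    linarith [Real.log_two_gt_d9]
  · have hharm : ∑ n ∈ Icc 1 N, (√(1 + (n : ℝ) ^ 2))⁻¹ ≤ 1 + Real.log N :=
      calc ∑ n ∈ Icc 1 N, (√(1 + (n : ℝ) ^ 2))⁻¹
          ≤ ∑ n ∈ Icc 1 N, ((n : ℝ))⁻¹ := sum_le_sum fun n hn => by
            have : (0 : ℝ) < n := by exact_mod_cast (mem_Icc.1 hn).1
            refine inv_anti₀ this (Real.le_sqrt_of_sq_le ?_)
            linarith
        _ = harmonic N := by rw [harmonic_eq_sum_Icc]; push_cast; rfl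
        _ ≤ 1 + Real.log N := harmonic_le_one_add_log N
    have hlog : 1 < Real.log N := by
      rw [Real.lt_log_iff_exp_lt (by positivity)]
      have : (3 : ℝ) ≤ N := by exact_mod_cast hN3
      linarith [Real.exp_one_lt_d9]
    norm_num
    linarith

theorem stmt_9_general {M : Type*} [Fintype M] (ωi : M → ℤ) (hω : ωi ≠ 0)
    (q : ℕ) (hq : 1 ≤ q)
    (P : (Fin q → M) → (Fin q → M) → ℂ) :
    HNorm q ωi P ≤ supNorm (pabs q P) ∧
    supNorm (pabs q P)
      ≤ 5 * (q : ℝ) * ((Finset.univ.sup fun j => (ωi j).natAbs : ℕ) : ℝ) * HNorm q ωi P ∧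
    supNorm (pabs q P)
      ≤ 5 * Real.log (2 * (q : ℝ) * ((Finset.univ.sup fun j => (ωi j).natAbs : ℕ) : ℝ)) *
          CNorm q ωi P := by
  set Ω : ℕ := univ.sup fun j => (ωi j).natAbs
  have hΩ : 1 ≤ Ω := by
    obtain ⟨j, hj⟩ := Function.ne_iff.mp hω
    exact (Int.natAbs_pos.2 hj).trans_le (le_sup (f := fun j => (ωi j).natAbs) (mem_univ j))
  have hqΩ : 1 ≤ q * Ω := Nat.one_le_iff_ne_zero.2 (by positivity)
  have hfreq := abs_sum_sub_sum_le (q := q) ωi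
  have hH : 0 ≤ HNorm q ωi P := (supNorm_nonneg _).trans (supNorm_pabs_projZ_le_HNorm ωi P 0)
  have hC : 0 ≤ CNorm q ωi P :=
    (mul_nonneg (Real.sqrt_nonneg _) (supNorm_nonneg _)).trans
      (sqrt_mul_supNorm_pabs_projZ_le_CNorm hfreq 0)
  refine ⟨HNorm_le_supNorm_pabs ωi P, ?_, ?_⟩
  · calc supNorm (pabs q P) ≤ (2 * (2 * q * Ω : ℕ) + 1) * HNorm q ωi P :=
          supNorm_pabs_le_mul_HNorm hfreq
      _ ≤ 5 * q * Ω * HNorm q ωi P := by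
          gcongr
          have : (1 : ℝ) ≤ q * Ω := by exact_mod_cast hqΩ
          push_cast
          linarith
  · calc supNorm (pabs q P)
          ≤ (∑ a ∈ Icc (-(2 * q * Ω : ℕ) : ℤ) (2 * q * Ω : ℕ), (√(1 + (a : ℝ) ^ 2))⁻¹) *
            CNorm q ωi P := supNorm_pabs_le_mul_CNorm hfreq
      _ ≤ 5 * Real.log (2 * q * Ω : ℕ) * CNorm q ωi P := by
          gcongr
          exact sum_inv_sqrt_one_add_sq_le_log (by rw [mul_assoc]; omega)
      _ = 5 * Real.log (2 * q * Ω) * CNorm q ωi P := by push_cast; rfl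

/-- comparison of the spectral norms with the classical sup norm:
`‖P‖_ℋ ≤ ‖⌊P⌉‖_∞ ≤ 5q|ω|_∞ ‖P‖_ℋ` and `‖⌊P⌉‖_∞ ≤ 5 log(2q|ω|_∞) ‖P‖_𝒞`. -/
theorem stmt_9 {M : Type*} [Fintype M] (ωi : M → ℤ) (hω : ωi ≠ 0)
    (q : ℕ) (hq : 1 ≤ q)
    (P : (Fin q → M) → (Fin q → M) → ℂ) (hsym : IsSymmCoef q P) :
    HNorm q ωi P ≤ supNorm (pabs q P) ∧
    supNorm (pabs q P)
      ≤ 5 * (q : ℝ) * ((Finset.univ.sup fun j => (ωi j).natAbs : ℕ) : ℝ) * HNorm q ωi P ∧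
    supNorm (pabs q P)
      ≤ 5 * Real.log (2 * (q : ℝ) * ((Finset.univ.sup fun j => (ωi j).natAbs : ℕ) : ℝ)) *
          CNorm q ωi P :=
  stmt_9_general ωi hω q hq P
end

section
/- Almost surely, the random frequencies $\omega_k = k^2 + X_k\langle k\rangle^{-s_*}$ ($k \in \mathbb{Z}$), where the $X_k$ are independent standard Gaussians and $s_* > 0$, satisfy: there exists $\gamma > 0$ such that for all $q \geq 1$, $\boldsymbol{m} \in (\mathbb{Z}\setminus\{0\})^q$, pairwise distinct $\boldsymbol{h}_1,\dots,\boldsymbol{h}_q \in \mathbb{Z}$, and all $a \in \mathbb{Z}$: $\big|a + \sum_{j=1}^q \boldsymbol{m}_j\omega_{\boldsymbol{h}_j}\big| \geq \gamma\,(\min_j\langle\boldsymbol{h}_j\rangle)^{-s_*}\prod_{j=1}^q|\boldsymbol{m}_j|^{-4}\langle\boldsymbol{h}_j\rangle^{-4}$. -/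
/-!
Fix a level `N ≥ 1` and take `γ = N⁻²`. Off the event that some `|X_k|` exceeds `N ⟨k⟩²`, the
form `a + ∑ m_j ω_{h_j}` has absolute value at least `1` once `|a| > 2N ∑ |m_j| ⟨h_j⟩²`, so for
each `(m, h)` only finitely many `a` matter. For each of them, the Gaussian at the index `j₀`
minimising `⟨h_j⟩` is independent of the rest of the form; by anti-concentration the form is
below `γ ⟨h_{j₀}⟩^{-s} w` with probability at most `γ w`, where `w = ∏ |m_j|^{-4} ⟨h_j⟩^{-4}`.
The union bound over all `(q, m, h, a)` converges although the tuples `h` are ordered, because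
`q` distinct integers satisfy `∏ ⟨h_j⟩² ≥ W^(q - 2W - 1)` for every `W`. With Chebyshev for the
tails, the exceptional event at level `N` has probability `O(1/N)`, so almost every `ω` escapes it
at some level.
-/

open MeasureTheory ProbabilityTheory Real Set Finset
open scoped ENNReal

namespace NonResonance

section Gaussian

lemma gaussianPDFReal_zero_one_le (x : ℝ) : gaussianPDFReal 0 1 x ≤ 1 / 2 := by
  have h2π : 2 ≤ √(2 * π) := Real.le_sqrt_of_sq_le (by nlinarith [Real.pi_gt_three])
  have hexp : rexp (-(x - 0) ^ 2 / (2 * ((1 : NNReal) : ℝ))) ≤ 1 :=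
    exp_le_one_iff.2 (by simp only [sub_zero, NNReal.coe_one]; nlinarith [sq_nonneg x])
  rw [gaussianPDFReal_def, NNReal.coe_one, mul_one]
  calc (√(2 * π))⁻¹ * rexp _ ≤ 2⁻¹ * 1 :=
        mul_le_mul (inv_anti₀ two_pos h2π) hexp (exp_nonneg _) (by norm_num)
    _ = 1 / 2 := by norm_num

lemma gaussianReal_Icc_le (a b : ℝ) :
    gaussianReal 0 1 (Icc a b) ≤ ENNReal.ofReal ((b - a) / 2) := by
  rw [gaussianReal_apply 0 one_ne_zero]
  calc ∫⁻ x in Icc a b, gaussianPDF 0 1 x ≤ ∫⁻ _ in Icc a b, ENNReal.ofReal (1 / 2) :=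
        lintegral_mono fun x => ENNReal.ofReal_le_ofReal (gaussianPDFReal_zero_one_le x)
    _ = ENNReal.ofReal ((b - a) / 2) := by
        rw [setLIntegral_const, Real.volume_Icc, ← ENNReal.ofReal_mul (by norm_num)]
        ring_nf

lemma gaussianReal_lt_abs_le {T : ℝ} (hT : 0 < T) :
    gaussianReal 0 1 {x | T < |x|} ≤ ENNReal.ofReal (1 / T ^ 2) := by
  calc gaussianReal 0 1 {x | T < |x|}
      ≤ gaussianReal 0 1 {x | T ≤ |id x - (gaussianReal 0 1)[id]|} := by
        refine measure_mono fun x hx => ?_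
        simp only [id, integral_id_gaussianReal, sub_zero, mem_ofPred_eq]
        exact hx.le
    _ ≤ ENNReal.ofReal (Var[id; gaussianReal 0 1] / T ^ 2) :=
        meas_ge_le_variance_div_sq (memLp_id_gaussianReal 2) hT
    _ = ENNReal.ofReal (1 / T ^ 2) := by rw [variance_id_gaussianReal, NNReal.coe_one]

variable {Ω : Type*} [MeasurableSpace Ω] {μ : Measure Ω}

lemma measure_abs_add_mul_le_le [IsProbabilityMeasure μ] {Z W : Ω → ℝ}
    (hZ : Measurable Z) (hW : Measurable W) (hZW : IndepFun Z W μ)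
    (hW_law : μ.map W = gaussianReal 0 1) {t : ℝ} (ht : t ≠ 0) (ε : ℝ) :
    μ {ω | |Z ω + t * W ω| ≤ ε} ≤ ENNReal.ofReal (ε / |t|) := by
  set S : Set (ℝ × ℝ) := {p | |p.1 + t * p.2| ≤ ε}
  have hS : MeasurableSet S := measurableSet_le (by fun_prop) measurable_const
  have hslice (z : ℝ) : Prod.mk z ⁻¹' S = Icc (-z / t - ε / |t|) (-z / t + ε / |t|) := by
    ext x
    rw [← Real.closedBall_eq_Icc, Metric.mem_closedBall, Real.dist_eq,
      le_div_iff₀ (abs_pos.2 ht), ← abs_mul,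
      show (x - -z / t) * t = z + t * x by field_simp; ring]
    rfl
  have := Measure.isProbabilityMeasure_map (μ := μ) hZ.aemeasurable
  calc μ {ω | |Z ω + t * W ω| ≤ ε} = μ.map (fun ω => (Z ω, W ω)) S :=
        (Measure.map_apply (hZ.prodMk hW) hS).symm
    _ = ∫⁻ z, gaussianReal 0 1 (Prod.mk z ⁻¹' S) ∂μ.map Z := by
        rw [(indepFun_iff_map_prod_eq_prod_map_map hZ.aemeasurable hW.aemeasurable).1 hZW,
          hW_law, Measure.prod_apply hS]
    _ ≤ ∫⁻ _, ENNReal.ofReal (ε / |t|) ∂μ.map Z := lintegral_mono fun z => by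
        rw [hslice]
        exact (gaussianReal_Icc_le _ _).trans_eq (by ring_nf)
    _ = ENNReal.ofReal (ε / |t|) := by simp

end Gaussian

noncomputable section Frequencies

variable {Ω : Type*}

def bracket (k : ℤ) : ℝ := √(1 + (k : ℝ) ^ 2)

def frequency (s : ℝ) (X : ℤ → Ω → ℝ) (k : ℤ) (ω : Ω) : ℝ :=
  (k : ℝ) ^ 2 + X k ω * bracket k ^ (-s)

lemma one_le_bracket (k : ℤ) : 1 ≤ bracket k :=
  Real.one_le_sqrt.2 (le_add_of_nonneg_right (sq_nonneg _))

lemma bracket_rpow_neg_pos (s : ℝ) (k : ℤ) : 0 < bracket k ^ (-s) :=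
  rpow_pos_of_pos (one_pos.trans_le (one_le_bracket k)) _

lemma bracket_rpow_neg_le_one {s : ℝ} (hs : 0 ≤ s) (k : ℤ) : bracket k ^ (-s) ≤ 1 :=
  rpow_le_one_of_one_le_of_nonpos (one_le_bracket k) (neg_nonpos.2 hs)

def weight {q : ℕ} (m h : Fin q → ℤ) : ℝ :=
  ∏ j, (((m j : ℝ) ^ 2) ^ (-2 : ℝ) * ((1 + (h j : ℝ) ^ 2) ^ (-2 : ℝ)))

lemma weight_nonneg {q : ℕ} (m h : Fin q → ℤ) : 0 ≤ weight m h :=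
  prod_nonneg fun _ _ => by positivity

lemma weight_le_one {q : ℕ} {m : Fin q → ℤ} (hm : ∀ j, m j ≠ 0) (h : Fin q → ℤ) :
    weight m h ≤ 1 := by
  refine prod_le_one (fun _ _ => by positivity) fun j _ => ?_
  have hm' : (1 : ℝ) ≤ (m j : ℝ) ^ 2 := by
    exact_mod_cast Int.one_le_abs (hm j) |>.trans (Int.le_self_sq _) |>.trans_eq (sq_abs _)
  exact mul_le_one₀ (rpow_le_one_of_one_le_of_nonpos hm' (by norm_num)) (by positivity)
    (rpow_le_one_of_one_le_of_nonpos (le_add_of_nonneg_right (sq_nonneg _)) (by norm_num))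

def resonantSet (s : ℝ) (X : ℤ → Ω → ℝ) (γ : ℝ) {Q : ℕ} (m h : Fin (Q + 1) → ℤ)
    (a : ℤ) : Set Ω :=
  {ω | |(a : ℝ) + ∑ j, (m j : ℝ) * frequency s X (h j) ω|
    < γ * (univ.inf' univ_nonempty fun j => bracket (h j)) ^ (-s) * weight m h}

def aprioriBound (N : ℕ) {q : ℕ} (m h : Fin q → ℤ) : ℤ :=
  2 * N * ∑ j, |m j| * (1 + h j ^ 2)

lemma abs_sum_mul_frequency_le {s : ℝ} (hs : 0 ≤ s) {X : ℤ → Ω → ℝ} {ω : Ω} {N : ℕ}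
    (hN : 1 ≤ N) (hX : ∀ k : ℤ, |X k ω| ≤ N * (1 + (k : ℝ) ^ 2)) {q : ℕ}
    (m h : Fin q → ℤ) :
    |∑ j, (m j : ℝ) * frequency s X (h j) ω| ≤ aprioriBound N m h := by
  have hfrequency (k : ℤ) : |frequency s X k ω| ≤ 2 * N * (1 + (k : ℝ) ^ 2) := by
    have hN' : (1 : ℝ) ≤ N := by exact_mod_cast hN
    calc |frequency s X k ω| ≤ |(k : ℝ) ^ 2| + |X k ω| * |bracket k ^ (-s)| :=
          (abs_add_le _ _).trans_eq (by rw [abs_mul])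
      _ ≤ (k : ℝ) ^ 2 + N * (1 + (k : ℝ) ^ 2) * 1 := by
          rw [abs_of_nonneg (sq_nonneg _), abs_of_pos (bracket_rpow_neg_pos s k)]
          gcongr
          exacts [(bracket_rpow_neg_pos s k).le, hX k, bracket_rpow_neg_le_one hs k]
      _ ≤ 2 * N * (1 + (k : ℝ) ^ 2) := by nlinarith [sq_nonneg (k : ℝ)]
  calc |∑ j, (m j : ℝ) * frequency s X (h j) ω|
      ≤ ∑ j, |(m j : ℝ)| * (2 * N * (1 + (h j : ℝ) ^ 2)) :=
        (abs_sum_le_sum_abs _ _).trans <| sum_le_sum fun j _ => by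
          rw [abs_mul]; exact mul_le_mul_of_nonneg_left (hfrequency _) (abs_nonneg _)
    _ = aprioriBound N m h := by
        push_cast [aprioriBound, mul_sum]
        exact sum_congr rfl fun j _ => by ring

def exceptionalSet (s : ℝ) (X : ℤ → Ω → ℝ) (N : ℕ) : Set Ω :=
  (⋃ (Q : ℕ) (m : Fin (Q + 1) → ℤ) (h : Fin (Q + 1) → ℤ)
      (_ : (∀ j, m j ≠ 0) ∧ Function.Injective h),
      ⋃ a ∈ Finset.Icc (-aprioriBound N m h) (aprioriBound N m h),
      resonantSet s X ((N : ℝ)⁻¹ ^ 2) m h a)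
    ∪ ⋃ k : ℤ, {ω | (N : ℝ) * (1 + (k : ℝ) ^ 2) < |X k ω|}

lemma le_abs_of_notMem_exceptionalSet {s : ℝ} (hs : 0 ≤ s) {X : ℤ → Ω → ℝ} {N : ℕ}
    (hN : 1 ≤ N) {ω : Ω} (hω : ω ∉ exceptionalSet s X N) {Q : ℕ}
    {m h : Fin (Q + 1) → ℤ} (hm : ∀ j, m j ≠ 0) (hinj : Function.Injective h) (a : ℤ) :
    (N : ℝ)⁻¹ ^ 2 * (univ.inf' univ_nonempty fun j => bracket (h j)) ^ (-s) * weight m h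
      ≤ |(a : ℝ) + ∑ j, (m j : ℝ) * frequency s X (h j) ω| := by
  simp only [exceptionalSet, mem_union, mem_iUnion, mem_ofPred_eq, not_or, not_exists,
    not_lt] at hω
  obtain ⟨hres, htail⟩ := hω
  by_cases ha : a ∈ Finset.Icc (-aprioriBound N m h) (aprioriBound N m h)
  · simpa [resonantSet] using hres Q m h ⟨hm, hinj⟩ a ha
  -- for large `|a|` the form is at least `1`, while the left-hand side is at most `1`
  have hN' : (1 : ℝ) ≤ N := by exact_mod_cast hN
  have hinf : 1 ≤ univ.inf' univ_nonempty fun j => bracket (h j) :=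
    le_inf' _ _ fun j _ => one_le_bracket (h j)
  have hγ : (N : ℝ)⁻¹ ^ 2 ≤ 1 := pow_le_one₀ (by positivity) (inv_le_one_of_one_le₀ hN')
  have ha' : (aprioriBound N m h : ℝ) + 1 ≤ |(a : ℝ)| := by
    rw [Finset.mem_Icc, ← abs_le, not_le] at ha
    exact_mod_cast ha
  calc (N : ℝ)⁻¹ ^ 2 * (univ.inf' univ_nonempty fun j => bracket (h j)) ^ (-s) * weight m h
      ≤ 1 * 1 * 1 := by
        gcongr
        exacts [weight_nonneg m h, rpow_le_one_of_one_le_of_nonpos hinf (neg_nonpos.2 hs),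
          weight_le_one hm h]
    _ ≤ |(a : ℝ)| - |∑ j, (m j : ℝ) * frequency s X (h j) ω| := by
        linarith [abs_sum_mul_frequency_le hs hN htail m h]
    _ ≤ |(a : ℝ) + ∑ j, (m j : ℝ) * frequency s X (h j) ω| := by
        simpa using abs_sub_abs_le_abs_sub (a : ℝ) (-∑ j, (m j : ℝ) * frequency s X (h j) ω)

end Frequencies

section Counting

lemma pow_card_le_pow_mul_prod_one_add_sq {ι : Type*} {s : Finset ι} {h : ι → ℤ}
    (hinj : Set.InjOn h s) {W : ℕ} (hW : 1 ≤ W) :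
    (W : ℝ) ^ #s ≤ W ^ (2 * W + 1) * ∏ i ∈ s, (1 + (h i : ℝ) ^ 2) := by
  classical
  -- distinct integers with `1 + k² < W` lie in `[-W, W]`, so there are at most `2W + 1` of them
  set p : ι → Prop := fun i => 1 + (h i : ℝ) ^ 2 < W
  have hsmall : #(s.filter p) ≤ 2 * W + 1 := by
    calc #(s.filter p) ≤ #(Finset.Icc (-(W : ℤ)) W) := by
          refine card_le_card_of_injOn h (fun i hi => ?_) (hinj.mono (filter_subset _ _))
          have hi' : h i ^ 2 < W := by
            have := (mem_filter.1 hi).2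
            simp only [p] at this
            exact_mod_cast (lt_add_of_pos_left _ one_pos).trans this
          simp only [coe_Icc, Set.mem_Icc]
          constructor <;> nlinarith [Int.le_self_sq (h i), Int.le_self_sq (-h i)]
      _ = 2 * W + 1 := by simp; omega
  have hlarge : (W : ℝ) ^ #(s.filter (¬ p ·))
      ≤ ∏ i ∈ s.filter (¬ p ·), (1 + (h i : ℝ) ^ 2) := by
    rw [← prod_const]
    exact prod_le_prod (fun _ _ => by positivity) fun i hi => not_lt.1 (mem_filter.1 hi).2
  have hone : 1 ≤ ∏ i ∈ s.filter p, (1 + (h i : ℝ) ^ 2) :=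
    one_le_prod fun i _ => le_add_of_nonneg_right (sq_nonneg _)
  have hW' : (1 : ℝ) ≤ W := by exact_mod_cast hW
  calc (W : ℝ) ^ #s = W ^ #(s.filter p) * W ^ #(s.filter (¬ p ·)) := by
        rw [← pow_add, card_filter_add_card_filter_not]
    _ ≤ W ^ (2 * W + 1) * ∏ i ∈ s.filter (¬ p ·), (1 + (h i : ℝ) ^ 2) :=
        mul_le_mul (pow_le_pow_right₀ hW' hsmall) hlarge (by positivity) (by positivity)
    _ ≤ W ^ (2 * W + 1) * ((∏ i ∈ s.filter p, (1 + (h i : ℝ) ^ 2)) *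
          ∏ i ∈ s.filter (¬ p ·), (1 + (h i : ℝ) ^ 2)) := by
        gcongr
        exact le_mul_of_one_le_left (prod_nonneg fun _ _ => by positivity) hone
    _ = W ^ (2 * W + 1) * ∏ i ∈ s, (1 + (h i : ℝ) ^ 2) := by
        rw [prod_filter_mul_prod_filter_not]

lemma abs_mul_rpow_neg_two_le {m : ℤ} (hm : m ≠ 0) :
    |(m : ℝ)| * ((m : ℝ) ^ 2) ^ (-2 : ℝ) ≤ 2 / (1 + (m : ℝ) ^ 2) := by
  have ht : (1 : ℝ) ≤ |(m : ℝ)| := by exact_mod_cast Int.one_le_abs hm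
  calc |(m : ℝ)| * ((m : ℝ) ^ 2) ^ (-2 : ℝ) = (|(m : ℝ)| ^ 3)⁻¹ := by
        rw [rpow_neg (sq_nonneg _), rpow_two, ← sq_abs (m : ℝ)]
        field_simp
    _ ≤ ((1 + |(m : ℝ)| ^ 2) / 2)⁻¹ := inv_anti₀ (by positivity) (by nlinarith)
    _ = 2 / (1 + (m : ℝ) ^ 2) := by rw [inv_div, sq_abs]

lemma rpow_neg_two_le {m : ℤ} (hm : m ≠ 0) :
    ((m : ℝ) ^ 2) ^ (-2 : ℝ) ≤ 2 / (1 + (m : ℝ) ^ 2) :=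
  (le_mul_of_one_le_left (by positivity) (by exact_mod_cast Int.one_le_abs hm)).trans
    (abs_mul_rpow_neg_two_le hm)

lemma rpow_neg_two_mul_rpow_neg_two_le {m : ℤ} (hm : m ≠ 0) (k : ℤ) :
    ((m : ℝ) ^ 2) ^ (-2 : ℝ) * (1 + (k : ℝ) ^ 2) ^ (-2 : ℝ)
      ≤ 2 / (1 + (m : ℝ) ^ 2) * (2 / (1 + (k : ℝ) ^ 2)) * (1 + (k : ℝ) ^ 2)⁻¹ := by
  rw [rpow_neg (by positivity : (0 : ℝ) ≤ 1 + (k : ℝ) ^ 2), rpow_two,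
    sq (1 + (k : ℝ) ^ 2), mul_inv, ← mul_assoc]
  gcongr
  · exact rpow_neg_two_le hm
  · rw [inv_eq_one_div]
    gcongr
    norm_num

lemma abs_mul_one_add_sq_mul_rpow_neg_two_le {m : ℤ} (hm : m ≠ 0) (k : ℤ) :
    |(m : ℝ)| * (1 + (k : ℝ) ^ 2) *
        (((m : ℝ) ^ 2) ^ (-2 : ℝ) * (1 + (k : ℝ) ^ 2) ^ (-2 : ℝ))
      ≤ 2 / (1 + (m : ℝ) ^ 2) * (2 / (1 + (k : ℝ) ^ 2)) := by
  have hk : (0 : ℝ) < 1 + (k : ℝ) ^ 2 := by positivity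
  calc |(m : ℝ)| * (1 + (k : ℝ) ^ 2) *
        (((m : ℝ) ^ 2) ^ (-2 : ℝ) * (1 + (k : ℝ) ^ 2) ^ (-2 : ℝ))
      = |(m : ℝ)| * ((m : ℝ) ^ 2) ^ (-2 : ℝ) * (1 / (1 + (k : ℝ) ^ 2)) := by
        rw [rpow_neg hk.le, rpow_two]
        field_simp
    _ ≤ 2 / (1 + (m : ℝ) ^ 2) * (2 / (1 + (k : ℝ) ^ 2)) := by
        gcongr
        exacts [abs_mul_rpow_neg_two_le hm, by norm_num]

lemma abs_mul_one_add_sq_mul_weight_le {Q : ℕ} {m h : Fin (Q + 1) → ℤ} (hm : ∀ j, m j ≠ 0)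
    (hinj : Function.Injective h) (j : Fin (Q + 1)) {W : ℕ} (hW : 1 ≤ W) :
    |(m j : ℝ)| * (1 + (h j : ℝ) ^ 2) * weight m h
      ≤ W ^ (2 * W + 1) / W ^ Q *
          ∏ i, (2 / (1 + (m i : ℝ) ^ 2) * (2 / (1 + (h i : ℝ) ^ 2))) := by
  set f : Fin (Q + 1) → ℝ := fun i => 2 / (1 + (m i : ℝ) ^ 2) * (2 / (1 + (h i : ℝ) ^ 2))
  set v : Fin (Q + 1) → ℝ := fun i => (1 + (h i : ℝ) ^ 2)⁻¹
  have hrest : ∏ i ∈ univ.erase j, v i ≤ W ^ (2 * W + 1) / W ^ Q := by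
    have := pow_card_le_pow_mul_prod_one_add_sq (s := univ.erase j) hinj.injOn hW
    rw [card_erase_of_mem (mem_univ _), card_univ, Fintype.card_fin, Nat.add_sub_cancel] at this
    rw [prod_inv_distrib, le_div_iff₀ (by positivity), inv_mul_le_iff₀ (by positivity)]
    linarith
  calc |(m j : ℝ)| * (1 + (h j : ℝ) ^ 2) * weight m h
      = |(m j : ℝ)| * (1 + (h j : ℝ) ^ 2) *
          (((m j : ℝ) ^ 2) ^ (-2 : ℝ) * (1 + (h j : ℝ) ^ 2) ^ (-2 : ℝ)) *
          ∏ i ∈ univ.erase j,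
            ((m i : ℝ) ^ 2) ^ (-2 : ℝ) * (1 + (h i : ℝ) ^ 2) ^ (-2 : ℝ) := by
        rw [weight, ← mul_prod_erase univ _ (mem_univ j)]
        ring
    _ ≤ f j * ∏ i ∈ univ.erase j, (f i * v i) :=
        mul_le_mul (abs_mul_one_add_sq_mul_rpow_neg_two_le (hm j) (h j))
          (prod_le_prod (fun _ _ => by positivity) fun i _ =>
            rpow_neg_two_mul_rpow_neg_two_le (hm i) (h i))
          (prod_nonneg fun _ _ => by positivity) (by positivity)
    _ = (∏ i ∈ univ.erase j, v i) * ∏ i, f i := by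
        rw [prod_mul_distrib, ← mul_prod_erase univ f (mem_univ j)]
        ring
    _ ≤ W ^ (2 * W + 1) / W ^ Q * ∏ i, f i :=
        mul_le_mul_of_nonneg_right hrest (prod_nonneg fun _ _ => by positivity)

lemma cast_two_mul_aprioriBound_add_one_mul_weight_le {N W : ℕ} (hN : 1 ≤ N) (hW : 1 ≤ W)
    {Q : ℕ} {m h : Fin (Q + 1) → ℤ} (hm : ∀ j, m j ≠ 0) (hinj : Function.Injective h) :
    ((2 * aprioriBound N m h + 1 : ℤ) : ℝ) * ((N : ℝ)⁻¹ ^ 2 * weight m h)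
      ≤ 5 * (Q + 1) * (W ^ (2 * W + 1) / W ^ Q) / N *
          ∏ i, (2 / (1 + (m i : ℝ) ^ 2) * (2 / (1 + (h i : ℝ) ^ 2))) := by
  set S := ∑ j, |(m j : ℝ)| * (1 + (h j : ℝ) ^ 2)
  have hN' : (1 : ℝ) ≤ N := by exact_mod_cast hN
  have hS : 1 ≤ S := by
    refine le_trans ?_ (single_le_sum (fun j _ => by positivity) (mem_univ 0))
    exact one_le_mul_of_one_le_of_one_le (by exact_mod_cast Int.one_le_abs (hm 0))
      (le_add_of_nonneg_right (sq_nonneg _))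
  have hSw : S * weight m h ≤ (Q + 1) * (W ^ (2 * W + 1) / W ^ Q *
      ∏ i, (2 / (1 + (m i : ℝ) ^ 2) * (2 / (1 + (h i : ℝ) ^ 2)))) := by
    rw [sum_mul]
    refine (sum_le_sum fun j _ => abs_mul_one_add_sq_mul_weight_le hm hinj j hW).trans_eq ?_
    simp
  have hw := weight_nonneg m h
  calc ((2 * aprioriBound N m h + 1 : ℤ) : ℝ) * ((N : ℝ)⁻¹ ^ 2 * weight m h)
      ≤ 5 * N * S * ((N : ℝ)⁻¹ ^ 2 * weight m h) := by
        gcongr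
        push_cast [aprioriBound]
        nlinarith
    _ = 5 / N * (S * weight m h) := by field_simp
    _ ≤ 5 / N * ((Q + 1) * (W ^ (2 * W + 1) / W ^ Q *
          ∏ i, (2 / (1 + (m i : ℝ) ^ 2) * (2 / (1 + (h i : ℝ) ^ 2))))) := by gcongr
    _ = _ := by ring

lemma summable_two_div_one_add_sq : Summable fun k : ℤ => 2 / (1 + (k : ℝ) ^ 2) := by
  refine Summable.of_norm_bounded_eventually
    ((Real.summable_one_div_int_pow.2 one_lt_two).mul_left 2) ?_
  filter_upwards [(Set.finite_singleton (0 : ℤ)).compl_mem_cofinite] with k hk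
  have hk : (k : ℝ) ≠ 0 := by exact_mod_cast hk
  rw [Real.norm_of_nonneg (by positivity), mul_one_div]
  gcongr
  linarith

lemma tsum_fin_pi_prod_eq_pow {α : Type*} (g : α → ℝ≥0∞) (n : ℕ) :
    ∑' f : Fin n → α, ∏ i, g (f i) = (∑' a, g a) ^ n := by
  induction n with
  | zero => simp
  | succ n ih =>
    have hcons (p : α × (Fin n → α)) :
        ∏ i, g ((Fin.consEquiv fun _ => α) p i) = g p.1 * ∏ i, g (p.2 i) := by
      simp [Fin.consEquiv, Fin.prod_univ_succ]
    rw [← (Fin.consEquiv fun _ => α).tsum_eq]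
    simp_rw [hcons]
    rw [ENNReal.tsum_prod (f := fun (a : α) (f : Fin n → α) => g a * ∏ i, g (f i)),
      pow_succ', ← ih, ← ENNReal.tsum_mul_right]
    exact tsum_congr fun a => ENNReal.tsum_mul_left

lemma tsum_tsum_mul_prod_mul_prod {α : Type*} (K : ℝ≥0∞) (g : α → ℝ≥0∞) (n : ℕ) :
    ∑' (m : Fin n → α) (h : Fin n → α), K * (∏ i, g (m i)) * ∏ i, g (h i)
      = K * (∑' a, g a) ^ n * (∑' a, g a) ^ n := by
  rw [tsum_congr fun m => ENNReal.tsum_mul_left, ENNReal.tsum_mul_right, ENNReal.tsum_mul_left,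
    tsum_fin_pi_prod_eq_pow]

-- the factor `W ^ (-Q)` gained from the distinctness of the `h j` beats the growth `U ^ (2Q)`
lemma summable_succ_mul_pow_div_pow {U : ℝ} {W : ℕ} (hW : U ^ 2 < W) :
    Summable fun Q : ℕ => 5 * (Q + 1) * (W ^ (2 * W + 1) / W ^ Q) * U ^ (2 * (Q + 1)) := by
  have hW0 : (0 : ℝ) < W := (sq_nonneg U).trans_lt hW
  have hr : ‖U ^ 2 / W‖ < 1 := by
    rw [Real.norm_of_nonneg (by positivity), div_lt_one hW0]
    exact hW
  refine ((summable_choose_mul_geometric_of_norm_lt_one 1 hr).mul_left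
    (5 * W ^ (2 * W + 1) * U ^ 2)).congr fun Q => ?_
  simp only [Nat.choose_one_right, div_pow]
  push_cast
  field_simp
  ring

end Counting

section Probability

variable {Ω : Type*} [MeasurableSpace Ω] {μ : Measure Ω}

lemma measure_abs_add_sum_mul_frequency_le [IsProbabilityMeasure μ] {s : ℝ}
    {X : ℤ → Ω → ℝ} (hmeas : ∀ k, Measurable (X k)) (hindep : iIndepFun X μ)
    (hgauss : ∀ k, μ.map (X k) = gaussianReal 0 1) {q : ℕ} (m : Fin q → ℝ)
    {h : Fin q → ℤ} (hinj : Function.Injective h) {j₀ : Fin q} (hm : m j₀ ≠ 0)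
    (a ε : ℝ) :
    μ {ω | |a + ∑ j, m j * frequency s X (h j) ω| ≤ ε * bracket (h j₀) ^ (-s)}
      ≤ ENNReal.ofReal (ε / |m j₀|) := by
  set c := bracket (h j₀) ^ (-s)
  have hc : 0 < c := bracket_rpow_neg_pos s (h j₀)
  -- keep the Gaussian at `j₀` and turn every other coordinate into its contribution to the sum
  set g : Fin q → ℝ → ℝ := fun j x =>
    if j = j₀ then x else m j * ((h j : ℝ) ^ 2 + x * bracket (h j) ^ (-s))
  have hg (j : Fin q) : Measurable (g j) := by
    simp only [g]; split_ifs <;> fun_prop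
  have hind := ((hindep.precomp hinj).comp g hg).indepFun_finsetSum_of_notMem
    (fun j => (hg j).comp (hmeas _)) (Finset.notMem_erase j₀ univ)
  set R : Ω → ℝ := ∑ j ∈ univ.erase j₀, g j ∘ X (h j)
  have hR : Measurable R := by
    simpa only [R, ← Finset.sum_apply] using
      Finset.measurable_sum _ fun j _ => (hg j).comp (hmeas _)
  have hZ : IndepFun (fun ω => a + m j₀ * (h j₀ : ℝ) ^ 2 + R ω) (X (h j₀)) μ := by
    have hX : g j₀ ∘ X (h j₀) = X (h j₀) := by funext ω; simp [g]
    exact (hX ▸ hind).comp (measurable_const_add _) measurable_id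
  have hsum (ω : Ω) : a + ∑ j, m j * frequency s X (h j) ω
      = a + m j₀ * (h j₀ : ℝ) ^ 2 + R ω + m j₀ * c * X (h j₀) ω := by
    rw [← Finset.add_sum_erase _ _ (mem_univ j₀)]
    simp only [R, Finset.sum_apply]
    have : ∑ j ∈ univ.erase j₀, m j * frequency s X (h j) ω
        = ∑ j ∈ univ.erase j₀, (g j ∘ X (h j)) ω :=
      Finset.sum_congr rfl fun j hj => by simp [g, frequency, Finset.ne_of_mem_erase hj]
    rw [this, frequency]
    ring
  calc μ {ω | |a + ∑ j, m j * frequency s X (h j) ω| ≤ ε * c}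
      = μ {ω | |a + m j₀ * (h j₀ : ℝ) ^ 2 + R ω + m j₀ * c * X (h j₀) ω|
          ≤ ε * c} := by
        simp_rw [hsum]
    _ ≤ ENNReal.ofReal (ε * c / |m j₀ * c|) :=
        measure_abs_add_mul_le_le (by fun_prop) (hmeas _) hZ (hgauss _) (mul_ne_zero hm hc.ne') _
    _ = ENNReal.ofReal (ε / |m j₀|) := by
        rw [abs_mul, abs_of_pos hc, mul_div_mul_right _ _ hc.ne']

lemma measure_resonantSet_le [IsProbabilityMeasure μ] {s : ℝ} {X : ℤ → Ω → ℝ}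
    (hmeas : ∀ k, Measurable (X k)) (hindep : iIndepFun X μ)
    (hgauss : ∀ k, μ.map (X k) = gaussianReal 0 1) {γ : ℝ} (hγ : 0 ≤ γ) {Q : ℕ}
    {m h : Fin (Q + 1) → ℤ} (hm : ∀ j, m j ≠ 0) (hinj : Function.Injective h) (a : ℤ) :
    μ (resonantSet s X γ m h a) ≤ ENNReal.ofReal (γ * weight m h) := by
  obtain ⟨j₀, -, hj₀⟩ := exists_mem_eq_inf' univ_nonempty fun j => bracket (h j)
  have hm₀ : (1 : ℝ) ≤ |(m j₀ : ℝ)| := by exact_mod_cast Int.one_le_abs (hm j₀)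
  calc μ (resonantSet s X γ m h a)
      ≤ μ {ω | |(a : ℝ) + ∑ j, (m j : ℝ) * frequency s X (h j) ω|
          ≤ γ * weight m h * bracket (h j₀) ^ (-s)} := by
        refine measure_mono fun ω hω => ?_
        rw [resonantSet, mem_ofPred_eq, hj₀] at hω
        rw [mem_ofPred_eq]
        linarith
    _ ≤ ENNReal.ofReal (γ * weight m h / |(m j₀ : ℝ)|) :=
        measure_abs_add_sum_mul_frequency_le hmeas hindep hgauss _ hinj
          (by exact_mod_cast hm j₀) _ _
    _ ≤ ENNReal.ofReal (γ * weight m h) :=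
        ENNReal.ofReal_le_ofReal (div_le_self (mul_nonneg hγ (weight_nonneg m h)) hm₀)

lemma measure_tail_le {X : ℤ → Ω → ℝ} (hmeas : ∀ k, Measurable (X k))
    (hgauss : ∀ k, μ.map (X k) = gaussianReal 0 1) {N : ℕ} (hN : 1 ≤ N) (k : ℤ) :
    μ {ω | (N : ℝ) * (1 + (k : ℝ) ^ 2) < |X k ω|}
      ≤ ENNReal.ofReal (2 / (1 + (k : ℝ) ^ 2) / N) := by
  have hN' : (1 : ℝ) ≤ N := by exact_mod_cast hN
  have hT : 1 ≤ (N : ℝ) * (1 + (k : ℝ) ^ 2) :=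
    one_le_mul_of_one_le_of_one_le hN' (le_add_of_nonneg_right (sq_nonneg _))
  have hmap : μ {ω | (N : ℝ) * (1 + (k : ℝ) ^ 2) < |X k ω|}
      = μ.map (X k) {x | (N : ℝ) * (1 + (k : ℝ) ^ 2) < |x|} :=
    (Measure.map_apply (hmeas k) (measurableSet_lt measurable_const continuous_abs.measurable)).symm
  rw [hmap, hgauss]
  refine (gaussianReal_lt_abs_le (one_pos.trans_le hT)).trans (ENNReal.ofReal_le_ofReal ?_)
  rw [div_div, div_le_div_iff₀ (by positivity) (by positivity)]
  nlinarith

lemma measure_iUnion_resonantSet_le [IsProbabilityMeasure μ] {s : ℝ} {X : ℤ → Ω → ℝ}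
    (hmeas : ∀ k, Measurable (X k)) (hindep : iIndepFun X μ)
    (hgauss : ∀ k, μ.map (X k) = gaussianReal 0 1) {N W : ℕ} (hN : 1 ≤ N) (hW : 1 ≤ W)
    {Q : ℕ} (m h : Fin (Q + 1) → ℤ) :
    μ (⋃ (_ : (∀ j, m j ≠ 0) ∧ Function.Injective h),
        ⋃ a ∈ Finset.Icc (-aprioriBound N m h) (aprioriBound N m h),
          resonantSet s X ((N : ℝ)⁻¹ ^ 2) m h a)
      ≤ ENNReal.ofReal (5 * (Q + 1) * (W ^ (2 * W + 1) / W ^ Q) / N) *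
          (∏ i, ENNReal.ofReal (2 / (1 + (m i : ℝ) ^ 2))) *
          ∏ i, ENNReal.ofReal (2 / (1 + (h i : ℝ) ^ 2)) := by
  by_cases hadm : (∀ j, m j ≠ 0) ∧ Function.Injective h
  swap
  · simp [hadm]
  simp only [hadm, ne_eq, not_false_eq_true, implies_true, and_self, iUnion_true]
  set A := aprioriBound N m h
  have hA : 0 ≤ A := by simp only [A, aprioriBound]; positivity
  have hcard : (#(Finset.Icc (-A) A) : ℝ≥0∞) = ENNReal.ofReal ((2 * A + 1 : ℤ) : ℝ) := by
    rw [Int.card_Icc, ← ENNReal.ofReal_natCast, ← Int.cast_natCast,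
      Int.toNat_of_nonneg (by omega)]
    congr 2
    ring
  calc μ (⋃ a ∈ Finset.Icc (-A) A, resonantSet s X ((N : ℝ)⁻¹ ^ 2) m h a)
      ≤ ∑ a ∈ Finset.Icc (-A) A, μ (resonantSet s X ((N : ℝ)⁻¹ ^ 2) m h a) :=
        measure_biUnion_finset_le _ _
    _ ≤ ∑ a ∈ Finset.Icc (-A) A, ENNReal.ofReal ((N : ℝ)⁻¹ ^ 2 * weight m h) :=
        sum_le_sum fun a _ =>
          measure_resonantSet_le hmeas hindep hgauss (by positivity) hadm.1 hadm.2 a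
    _ = ENNReal.ofReal (((2 * A + 1 : ℤ) : ℝ) * ((N : ℝ)⁻¹ ^ 2 * weight m h)) := by
        rw [sum_const, nsmul_eq_mul, hcard,
          ← ENNReal.ofReal_mul (by exact_mod_cast (by omega : (0 : ℤ) ≤ 2 * A + 1))]
    _ ≤ ENNReal.ofReal (5 * (Q + 1) * (W ^ (2 * W + 1) / W ^ Q) / N *
          ∏ i, (2 / (1 + (m i : ℝ) ^ 2) * (2 / (1 + (h i : ℝ) ^ 2)))) :=
        ENNReal.ofReal_le_ofReal
          (cast_two_mul_aprioriBound_add_one_mul_weight_le hN hW hadm.1 hadm.2)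
    _ = ENNReal.ofReal (5 * (Q + 1) * (W ^ (2 * W + 1) / W ^ Q) / N) *
          ∏ i, (ENNReal.ofReal (2 / (1 + (m i : ℝ) ^ 2)) *
            ENNReal.ofReal (2 / (1 + (h i : ℝ) ^ 2))) := by
        rw [ENNReal.ofReal_mul (by positivity),
          ENNReal.ofReal_prod_of_nonneg (fun i _ => by positivity)]
        exact congrArg _ (prod_congr rfl fun i _ => ENNReal.ofReal_mul (by positivity))
    _ = _ := by rw [prod_mul_distrib]; ring

lemma exists_measure_exceptionalSet_le [IsProbabilityMeasure μ] {s : ℝ} {X : ℤ → Ω → ℝ}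
    (hmeas : ∀ k, Measurable (X k)) (hindep : iIndepFun X μ)
    (hgauss : ∀ k, μ.map (X k) = gaussianReal 0 1) :
    ∃ C : ℝ, ∀ N : ℕ, 1 ≤ N → μ (exceptionalSet s X N) ≤ ENNReal.ofReal (C / N) := by
  set U := ∑' k : ℤ, 2 / (1 + (k : ℝ) ^ 2)
  have hU : ∑' k : ℤ, ENNReal.ofReal (2 / (1 + (k : ℝ) ^ 2)) = ENNReal.ofReal U :=
    (ENNReal.ofReal_tsum_of_nonneg (fun _ => by positivity) summable_two_div_one_add_sq).symm
  have hU0 : 0 ≤ U := tsum_nonneg fun _ => by positivity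
  obtain ⟨W, hW⟩ := exists_nat_gt (U ^ 2)
  have hW1 : 1 ≤ W := by exact_mod_cast (sq_nonneg U).trans_lt hW
  set c : ℕ → ℝ := fun Q => 5 * (Q + 1) * (W ^ (2 * W + 1) / W ^ Q) * U ^ (2 * (Q + 1))
  refine ⟨∑' Q, c Q + U, fun N hN => ?_⟩
  have hQ (Q : ℕ) : ∑' (m : Fin (Q + 1) → ℤ) (h : Fin (Q + 1) → ℤ),
      ENNReal.ofReal (5 * (Q + 1) * (W ^ (2 * W + 1) / W ^ Q) / N) *
        (∏ i, ENNReal.ofReal (2 / (1 + (m i : ℝ) ^ 2))) *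
        ∏ i, ENNReal.ofReal (2 / (1 + (h i : ℝ) ^ 2)) = ENNReal.ofReal (c Q / N) := by
    rw [tsum_tsum_mul_prod_mul_prod _ fun k : ℤ => ENNReal.ofReal (2 / (1 + (k : ℝ) ^ 2)), hU,
      ← ENNReal.ofReal_pow hU0, ← ENNReal.ofReal_mul (by positivity),
      ← ENNReal.ofReal_mul (by positivity)]
    congr 1
    simp only [c]
    ring
  calc μ (exceptionalSet s X N)
      ≤ ∑' (Q : ℕ) (m : Fin (Q + 1) → ℤ) (h : Fin (Q + 1) → ℤ),
          ENNReal.ofReal (5 * (Q + 1) * (W ^ (2 * W + 1) / W ^ Q) / N) *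
            (∏ i, ENNReal.ofReal (2 / (1 + (m i : ℝ) ^ 2))) *
            ∏ i, ENNReal.ofReal (2 / (1 + (h i : ℝ) ^ 2))
        + ∑' k : ℤ, ENNReal.ofReal (2 / (1 + (k : ℝ) ^ 2) / N) := by
        refine (measure_union_le _ _).trans (add_le_add ?_ ?_)
        · refine (measure_iUnion_le _).trans (ENNReal.tsum_le_tsum fun Q => ?_)
          refine (measure_iUnion_le _).trans (ENNReal.tsum_le_tsum fun m => ?_)
          refine (measure_iUnion_le _).trans (ENNReal.tsum_le_tsum fun h => ?_)
          exact measure_iUnion_resonantSet_le hmeas hindep hgauss hN hW1 m h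
        · exact (measure_iUnion_le _).trans
            (ENNReal.tsum_le_tsum fun k => measure_tail_le hmeas hgauss hN k)
    _ = ENNReal.ofReal ((∑' Q, c Q + U) / N) := by
        simp_rw [hQ]
        rw [← ENNReal.ofReal_tsum_of_nonneg (fun _ => by positivity)
          ((summable_succ_mul_pow_div_pow hW).div_const _),
          ← ENNReal.ofReal_tsum_of_nonneg (fun _ => by positivity)
            (summable_two_div_one_add_sq.div_const _),
          ← ENNReal.ofReal_add (by positivity) (by positivity), tsum_div_const, tsum_div_const,
          add_div]

lemma ae_exists_notMem_exceptionalSet [IsProbabilityMeasure μ] {s : ℝ} {X : ℤ → Ω → ℝ}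
    (hmeas : ∀ k, Measurable (X k)) (hindep : iIndepFun X μ)
    (hgauss : ∀ k, μ.map (X k) = gaussianReal 0 1) :
    ∀ᵐ ω ∂μ, ∃ N : ℕ, 1 ≤ N ∧ ω ∉ exceptionalSet s X N := by
  obtain ⟨C, hC⟩ := exists_measure_exceptionalSet_le (s := s) hmeas hindep hgauss
  have hnull : μ (⋂ N : ℕ, exceptionalSet s X (N + 1)) = 0 := by
    have hlim := ENNReal.tendsto_ofReal
      ((tendsto_const_div_atTop_nhds_zero_nat C).comp (Filter.tendsto_add_atTop_nat 1))
    rw [ENNReal.ofReal_zero] at hlim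
    exact le_antisymm (ge_of_tendsto' hlim fun N =>
      (measure_mono (iInter_subset _ N)).trans (hC (N + 1) (by omega))) zero_le
  filter_upwards [measure_eq_zero_iff_ae_notMem.1 hnull] with ω hω
  obtain ⟨N, hN⟩ := by simpa only [mem_iInter, not_forall] using hω
  exact ⟨N + 1, by omega, hN⟩

end Probability

end NonResonance

/-- almost surely, the randomized frequencies
`ω_k = k² + X_k ⟨k⟩^{-s_*}` satisfy a weak non-resonance estimate. -/
theorem stmt_15 (s : ℝ) (hs : 0 < s) {Ω : Type*} [MeasurableSpace Ω]
    (μ : Measure Ω) [IsProbabilityMeasure μ]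
    (X : ℤ → Ω → ℝ) (hmeas : ∀ k, Measurable (X k))
    (hindep : ProbabilityTheory.iIndepFun X μ)
    (hgauss : ∀ k, μ.map (X k) = ProbabilityTheory.gaussianReal 0 1) :
    ∀ᵐ ω ∂μ, ∃ γ > (0 : ℝ), ∀ (q : ℕ) (hq : 1 ≤ q) (m : Fin q → ℤ),
      (∀ j, m j ≠ 0) → ∀ h : Fin q → ℤ, Function.Injective h → ∀ a : ℤ,
      γ * (Finset.univ.inf' ⟨⟨0, hq⟩, Finset.mem_univ _⟩
            fun j => Real.sqrt (1 + (h j : ℝ) ^ 2)) ^ (-s) *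
          ∏ j, (((m j : ℝ) ^ 2) ^ (-2 : ℝ) * ((1 + (h j : ℝ) ^ 2) ^ (-2 : ℝ)))
        ≤ |(a : ℝ) + ∑ j, (m j : ℝ) *
            ((h j : ℝ) ^ 2 + X (h j) ω * Real.sqrt (1 + (h j : ℝ) ^ 2) ^ (-s))| := by
  filter_upwards [NonResonance.ae_exists_notMem_exceptionalSet (s := s) hmeas hindep hgauss]
    with ω ⟨N, hN, hω⟩
  refine ⟨(N : ℝ)⁻¹ ^ 2, pow_pos (inv_pos.2 (Nat.cast_pos.2 hN)) 2, ?_⟩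
  intro q hq m hm h hinj a
  obtain ⟨Q, rfl⟩ : ∃ Q, q = Q + 1 := ⟨q - 1, by omega⟩
  exact NonResonance.le_abs_of_notMem_exceptionalSet hs.le hN hω hm hinj a
end

section
/- For any dyadic integers $K_1, K_2 \geq 1$, any $\tau \in \mathbb{R}$ and $k \in \mathbb{Z}$, the set $A_{\tau,k} = \{(\tau_1,k_1) \in \mathbb{R}\times\mathbb{Z} : \langle\tau_1 - k_1^2\rangle \sim K_1,\ \langle\tau-\tau_1-(k-k_1)^2\rangle \sim K_2\}$ has product measure (Lebesgue in $\tau_1$ times counting in $k_1$) bounded by $C\min(K_1,K_2)\max(K_1,K_2)^{1/2}$ for a universal constant $C$. -/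
/-!
For fixed `k₁`, each of the two conditions confines `τ₁` to an interval of length `O(K_i)`, so
the `τ₁`-fibre has measure `O(min(K₁, K₂))`. Adding the two conditions eliminates `τ₁`: since
`k₁² + (k - k₁)² = 2 (k₁ - k/2)² + k²/2`, the square `(k₁ - k/2)²` lies in a fixed interval of
length `O(max(K₁, K₂))`, which contains the squares of at most `O(max(K₁, K₂)^{1/2})` numbers of
the form `k₁ - k/2`.
-/

open MeasureTheory Set
open scoped ENNReal

theorem Real.sqrt_add_le_add_sqrt (c : ℝ) {L : ℝ} (hL : 0 ≤ L) : √(c + L) ≤ √c + √L := by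
  rw [Real.sqrt_le_iff]
  refine ⟨by positivity, ?_⟩
  have hc : c ≤ √c ^ 2 := by
    rcases le_total 0 c with hc | hc
    · rw [Real.sq_sqrt hc]
    · exact hc.trans (sq_nonneg _)
  nlinarith [Real.sq_sqrt hL, Real.sqrt_nonneg c, Real.sqrt_nonneg L]

theorem Real.abs_mem_Icc_sqrt_of_sq_mem_Icc {y c L : ℝ} (hL : 0 ≤ L) (h : y ^ 2 ∈ Icc c (c + L)) :
    |y| ∈ Icc (√c) (√c + √L) :=
  ⟨Real.sqrt_sq_eq_abs y ▸ Real.sqrt_le_sqrt h.1,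
    (Real.abs_le_sqrt h.2).trans (Real.sqrt_add_le_add_sqrt c hL)⟩

theorem encard_int_preimage_Icc_le (a b : ℝ) :
    ((((↑) : ℤ → ℝ) ⁻¹' Icc a b).encard : ℝ≥0∞) ≤ ENNReal.ofReal (b - a + 1) := by
  rw [Int.preimage_Icc, ← Finset.coe_Icc, encard_coe_eq_coe_finsetCard, ENat.toENNReal_coe,
    Int.card_Icc]
  rcases le_total (⌊b⌋ + 1 - ⌈a⌉) 0 with h | h
  · simp [Int.toNat_of_nonpos h]
  · rw [← ENNReal.ofReal_natCast]
    refine ENNReal.ofReal_le_ofReal ?_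
    have hcard : ((⌊b⌋ + 1 - ⌈a⌉).toNat : ℝ) = ⌊b⌋ + 1 - ⌈a⌉ := by
      exact_mod_cast Int.toNat_of_nonneg h
    linarith [Int.floor_le b, Int.le_ceil a]

theorem encard_setOf_sq_sub_mem_Icc_le (x₀ c L : ℝ) (hL : 0 ≤ L) :
    ({n : ℤ | ((n : ℝ) - x₀) ^ 2 ∈ Icc c (c + L)}.encard : ℝ≥0∞) ≤ ENNReal.ofReal (2 * √L + 2) := by
  have hsub : {n : ℤ | ((n : ℝ) - x₀) ^ 2 ∈ Icc c (c + L)} ⊆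
      ((↑) ⁻¹' Icc (x₀ + √c) (x₀ + √c + √L)) ∪ ((↑) ⁻¹' Icc (x₀ - √c - √L) (x₀ - √c)) := by
    intro n hn
    obtain ⟨hlo, hhi⟩ := Real.abs_mem_Icc_sqrt_of_sq_mem_Icc hL hn
    rcases le_total 0 ((n : ℝ) - x₀) with h | h
    · rw [abs_of_nonneg h] at hlo hhi
      exact Or.inl ⟨by linarith, by linarith⟩
    · rw [abs_of_nonpos h] at hlo hhi
      exact Or.inr ⟨by linarith, by linarith⟩
  calc ({n : ℤ | ((n : ℝ) - x₀) ^ 2 ∈ Icc c (c + L)}.encard : ℝ≥0∞)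
      ≤ (((↑) ⁻¹' Icc (x₀ + √c) (x₀ + √c + √L) : Set ℤ).encard : ℝ≥0∞)
        + (((↑) ⁻¹' Icc (x₀ - √c - √L) (x₀ - √c) : Set ℤ).encard : ℝ≥0∞) := by
        rw [← ENat.toENNReal_add, ENat.toENNReal_le]
        exact (encard_le_encard hsub).trans (encard_union_le _ _)
    _ ≤ ENNReal.ofReal (√L + 1) + ENNReal.ofReal (√L + 1) := by
        gcongr
        · exact (encard_int_preimage_Icc_le _ _).trans_eq (by ring_nf)
        · exact (encard_int_preimage_Icc_le _ _).trans_eq (by ring_nf)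
    _ = ENNReal.ofReal (2 * √L + 2) := by
        rw [← ENNReal.ofReal_add (by positivity) (by positivity)]; ring_nf

theorem prod_count_le_encard_mul {α β : Type*} [MeasurableSpace α] [MeasurableSpace β]
    [MeasurableSingletonClass β] [Countable β] (μ : Measure α) {s : Set (α × β)} {T : Set β}
    {L : ℝ≥0∞} (hT : ∀ p ∈ s, p.2 ∈ T) (hfiber : ∀ b ∈ T, μ {a | (a, b) ∈ s} ≤ L) :
    μ.prod Measure.count s ≤ T.encard * L := by
  have hsub : s ⊆ ⋃ b ∈ T, {a | (a, b) ∈ s} ×ˢ {b} := fun p hp =>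
    mem_biUnion (hT p hp) ⟨hp, rfl⟩
  calc μ.prod Measure.count s
      ≤ ∑' b : T, μ.prod Measure.count ({a | (a, (b : β)) ∈ s} ×ˢ {(b : β)}) :=
        (measure_mono hsub).trans (measure_biUnion_le _ T.to_countable _)
    _ ≤ ∑' _ : T, L := by
        refine ENNReal.tsum_le_tsum fun b => (Measure.prod_prod_le _ _).trans ?_
        rw [Measure.count_singleton, mul_one]
        exact hfiber b b.2
    _ = T.encard * L := by rw [ENNReal.tsum_const, ENat.card_coe_set_eq]

theorem Real.volume_le_of_forall_abs_sub_le {s : Set ℝ} {a r : ℝ} (h : ∀ x ∈ s, |x - a| ≤ r) :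
    volume s ≤ ENNReal.ofReal (2 * r) :=
  Real.volume_closedBall a r ▸ measure_mono fun x hx => by
    rw [Metric.mem_closedBall, Real.dist_eq]
    exact h x hx

theorem Real.volume_le_of_forall_abs_sub_le_of_forall_abs_sub_le {s : Set ℝ} {a b r₁ r₂ : ℝ}
    (h₁ : ∀ x ∈ s, |x - a| ≤ r₁) (h₂ : ∀ x ∈ s, |x - b| ≤ r₂) :
    volume s ≤ ENNReal.ofReal (2 * min r₁ r₂) := by
  rw [mul_min_of_nonneg _ _ zero_le_two, ENNReal.ofReal_min]
  exact le_min (Real.volume_le_of_forall_abs_sub_le h₁) (Real.volume_le_of_forall_abs_sub_le h₂)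

theorem abs_le_of_sqrt_one_add_sq_le {x K : ℝ} (h : √(1 + x ^ 2) ≤ K) : |x| ≤ K :=
  (Real.abs_le_sqrt (by linarith)).trans h

theorem sq_sub_half_mem_Icc_of_abs_le {τ τ₁ k k₁ K₁ K₂ : ℝ} (h₁ : |τ₁ - k₁ ^ 2| ≤ K₁)
    (h₂ : |τ - τ₁ - (k - k₁) ^ 2| ≤ K₂) :
    (k₁ - k / 2) ^ 2 ∈
      Icc (τ / 2 - k ^ 2 / 4 - (K₁ + K₂) / 2) (τ / 2 - k ^ 2 / 4 - (K₁ + K₂) / 2 + (K₁ + K₂)) := by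
  rw [abs_le] at h₁ h₂
  constructor <;> linarith

theorem two_mul_sqrt_add_two_le_six_mul_sqrt_max {K₁ K₂ : ℝ} (hK₁ : 1 ≤ K₁) :
    2 * √(2 * K₁ + 2 * K₂) + 2 ≤ 6 * √(max K₁ K₂) := by
  have h4M : √(2 * K₁ + 2 * K₂) ≤ 2 * √(max K₁ K₂) := by
    rw [show 2 * √(max K₁ K₂) = √(2 ^ 2 * max K₁ K₂) by simp]
    exact Real.sqrt_le_sqrt (by linarith [le_max_left K₁ K₂, le_max_right K₁ K₂])
  have h1M : 1 ≤ √(max K₁ K₂) := Real.one_le_sqrt.mpr (hK₁.trans (le_max_left _ _))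
  linarith

/-- the counting bound at the heart of Bourgain's `L⁴` Strichartz
estimate on the torus: the set
`A_{τ,k} = {(τ₁,k₁) : ⟨τ₁-k₁²⟩ ∼ K₁, ⟨τ-τ₁-(k-k₁)²⟩ ∼ K₂}` has
(Lebesgue × counting) measure at most `C min(K₁,K₂) max(K₁,K₂)^{1/2}`. -/
theorem stmt_17 :
    ∃ C : ℝ, 0 < C ∧ ∀ K₁ K₂ : ℝ, (∃ n : ℕ, K₁ = 2 ^ n) → (∃ n : ℕ, K₂ = 2 ^ n) →
      ∀ (τ : ℝ) (k : ℤ),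
        (volume.prod Measure.count)
            {p : ℝ × ℤ |
              (K₁ ≤ Real.sqrt (1 + (p.1 - (p.2 : ℝ) ^ 2) ^ 2) ∧
                Real.sqrt (1 + (p.1 - (p.2 : ℝ) ^ 2) ^ 2) ≤ 2 * K₁) ∧
              (K₂ ≤ Real.sqrt (1 + (τ - p.1 - ((k : ℝ) - (p.2 : ℝ)) ^ 2) ^ 2) ∧
                Real.sqrt (1 + (τ - p.1 - ((k : ℝ) - (p.2 : ℝ)) ^ 2) ^ 2) ≤ 2 * K₂)}
          ≤ ENNReal.ofReal (C * min K₁ K₂ * Real.sqrt (max K₁ K₂)) := by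
  refine ⟨24, by norm_num, fun K₁ K₂ hK₁ hK₂ τ k => ?_⟩
  have one_le_of_dyadic : ∀ K : ℝ, (∃ n : ℕ, K = 2 ^ n) → 1 ≤ K := by
    rintro _ ⟨n, rfl⟩
    exact one_le_pow₀ one_le_two
  have hK₁1 := one_le_of_dyadic K₁ hK₁
  have hK₂1 := one_le_of_dyadic K₂ hK₂
  set c := τ / 2 - (k : ℝ) ^ 2 / 4 - (2 * K₁ + 2 * K₂) / 2
  calc _ ≤ ({n : ℤ | ((n : ℝ) - k / 2) ^ 2 ∈ Icc c (c + (2 * K₁ + 2 * K₂))}.encard : ℝ≥0∞) *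
        ENNReal.ofReal (2 * min (2 * K₁) (2 * K₂)) := by
        refine prod_count_le_encard_mul _ (fun p hp => ?_) (fun k₁ _ => ?_)
        · exact sq_sub_half_mem_Icc_of_abs_le (abs_le_of_sqrt_one_add_sq_le hp.1.2)
            (abs_le_of_sqrt_one_add_sq_le hp.2.2)
        refine Real.volume_le_of_forall_abs_sub_le_of_forall_abs_sub_le (a := (k₁ : ℝ) ^ 2)
          (b := τ - ((k : ℝ) - k₁) ^ 2) (fun τ₁ hτ₁ => abs_le_of_sqrt_one_add_sq_le hτ₁.1.2)
          (fun τ₁ hτ₁ => ?_)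
        rw [abs_sub_comm, show τ - ((k : ℝ) - k₁) ^ 2 - τ₁ = τ - τ₁ - ((k : ℝ) - k₁) ^ 2 by ring]
        exact abs_le_of_sqrt_one_add_sq_le hτ₁.2.2
    _ ≤ ENNReal.ofReal (6 * √(max K₁ K₂)) * ENNReal.ofReal (2 * min (2 * K₁) (2 * K₂)) := by
        gcongr
        exact (encard_setOf_sq_sub_mem_Icc_le _ _ _ (by linarith)).trans
          (ENNReal.ofReal_le_ofReal (two_mul_sqrt_add_two_le_six_mul_sqrt_max hK₁1))
    _ = ENNReal.ofReal (24 * min K₁ K₂ * √(max K₁ K₂)) := by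
        rw [← mul_min_of_nonneg _ _ zero_le_two, ← ENNReal.ofReal_mul (by positivity)]
        ring_nf
end
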